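/- arXiv:2012.13732 — 3 statements merged into one kernel-verified Lean document; each statement's English description precedes it below -/
import Mathlib

section
/- Let λ^1,…,λ^r ∈ P_n, let I = ⟨λ^1,…,λ^r⟩_{S_n} and let J = (x^{λ^1},…,x^{λ^r}) ⊆ R be its unsymmetrization. Then for every μ ∈ P_n and every i ≥ 0, γ_i^{μ,0}(I) = dim_k Tor_i(J,k)_μ, where the right-hand side is the component of Tor_i(J,k) in multidegree μ ∈ Z^n. -/
open scoped BigOperators

noncomputable section
open Classical

/-! ## Generic (labeled) simplicial chain complexes and reduced homology over a field -/

section Homology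

variable (K : Type) [Field K] {α : Type}

/-- Index type for chains: elements of `S` whose face (second component) has `j` elements. -/
def ChainIdx (S : Set (α × Finset ℕ)) (j : ℕ) : Type :=
  {q : α × Finset ℕ // q ∈ S ∧ q.2.card = j}

/-- The boundary of a basis element, with the usual simplicial signs. -/
noncomputable def bdElt (S : Set (α × Finset ℕ)) (j : ℕ) (q : ChainIdx S (j + 1)) :
    ChainIdx S j →₀ K :=
  ∑ v ∈ q.1.2,
    if h : (q.1.1, q.1.2.erase v) ∈ S ∧ (q.1.2.erase v).card = j then
      ((-1 : K) ^ (q.1.2.filter (fun u => u ≤ v)).card) •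
        Finsupp.single (⟨(q.1.1, q.1.2.erase v), h⟩ : ChainIdx S j) (1 : K)
    else 0

/-- The simplicial boundary map. -/
noncomputable def bd (S : Set (α × Finset ℕ)) (j : ℕ) :
    (ChainIdx S (j + 1) →₀ K) →ₗ[K] (ChainIdx S j →₀ K) :=
  Finsupp.linearCombination K (bdElt K S j)

/-- Cycles in homological degree `j` (chains are indexed by the cardinality of faces;
degree `j` corresponds to reduced topological degree `j - 1`). -/
noncomputable def cycles (S : Set (α × Finset ℕ)) : (j : ℕ) → Submodule K (ChainIdx S j →₀ K)
  | 0 => ⊤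
  | (i + 1) => LinearMap.ker (bd K S i)

/-- `rhd K S j` is the dimension of the reduced homology group `H̃_{j-1}` of the complex `S`
(the chain groups being finite dimensional, this is `dim` cycles `- dim` boundaries). -/
noncomputable def rhd (S : Set (α × Finset ℕ)) (j : ℕ) : ℕ :=
  Module.finrank K (cycles K S j) -
    Module.finrank K (LinearMap.range (bd K S j) ⊓ cycles K S j : Submodule K _)

/-- `hdim K S j = dim_K H̃_j(S; K)`, for `j : ℤ` (zero for `j ≤ -2`). -/
noncomputable def hdim (S : Set (α × Finset ℕ)) (j : ℤ) : ℕ :=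
  if 0 ≤ j + 1 then rhd K S (j + 1).toNat else 0

/-- View an unlabeled collection of faces as a labeled one (labels in `Unit`). -/
def lab (Δ : Set (Finset ℕ)) : Set (Unit × Finset ℕ) := {q | q.2 ∈ Δ}

/-- Dimension of reduced homology `H̃_{j-1}(Δ; K)` of a collection `Δ` of finite sets. -/
noncomputable def rhd0 (Δ : Set (Finset ℕ)) (j : ℕ) : ℕ := rhd K (lab Δ) j

/-- Dimension of reduced homology `H̃_j(Δ; K)`, `j : ℤ`. -/
noncomputable def hdim0 (Δ : Set (Finset ℕ)) (j : ℤ) : ℕ := hdim K (lab Δ) j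

end Homology

/-! ## Monomial ideals in `k[x_1, …, x_n]`, invariant under the symmetric group -/

section Poly

variable (K : Type) [Field K] (n : ℕ)

/-- The monomial `x^a` in `k[x_1, …, x_n]`. -/
noncomputable def mon (a : Fin n → ℕ) : MvPolynomial (Fin n) K :=
  MvPolynomial.monomial (Finsupp.equivFunOnFinite.symm a) 1

/-- A monomial ideal: an ideal generated by a set of monomials. -/
def IsMonomialIdeal (I : Ideal (MvPolynomial (Fin n) K)) : Prop :=
  ∃ S : Set (Fin n → ℕ), I = Ideal.span (mon K n '' S)

/-- `I` is invariant under the action of `S_n` permuting the variables. -/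
def IsSymmetricIdeal (I : Ideal (MvPolynomial (Fin n) K)) : Prop :=
  ∀ σ : Equiv.Perm (Fin n), Ideal.map (MvPolynomial.rename σ).toRingHom I = I

end Poly

/-! ## Partitions given by blocks `(d_1^{p_1}, …, d_s^{p_s}, 0^{p_{s+1}})` -/

section Blocks

/-- `cumsum p k = p 0 + ⋯ + p (k-1)`. -/
def cumsum (p : ℕ → ℕ) (k : ℕ) : ℕ := ∑ j ∈ Finset.range k, p j

/-- The index of the block (among blocks `0, …, s`) containing position `i`,
for blocks of sizes `p 0, …, p (s-1)` followed by a final block. -/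
def blkOf (p : ℕ → ℕ) (s i : ℕ) : ℕ :=
  ((Finset.range s).filter fun k => cumsum p (k + 1) ≤ i).card

/-- The partition `μ = (d_0^{p_0}, …, d_{s-1}^{p_{s-1}}, 0^{p_s})` (0-indexed blocks),
as a function of the position `i ∈ {0, …, n-1}` where `n = cumsum p (s+1)`. -/
def muOf (s : ℕ) (d p : ℕ → ℕ) (i : ℕ) : ℕ :=
  if blkOf p s i < s then d (blkOf p s i) else 0

/-- The partition `μ ∖ c`, obtained from `μ` by replacing, for each `k`, the last `c k` of
the parts equal to `d k` by `d k - 1`. -/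
def muMinus (s : ℕ) (d p c : ℕ → ℕ) (i : ℕ) : ℕ :=
  if blkOf p s i < s then
    (if p (blkOf p s i) - c (blkOf p s i) ≤ i - cumsum p (blkOf p s i) then
      d (blkOf p s i) - 1 else d (blkOf p s i))
  else 0

/-- Indicator vector of a finite set `F`. -/
def eF (F : Finset ℕ) (j : ℕ) : ℕ := if j ∈ F then 1 else 0

end Blocks

/-! ## The simplicial complexes `Δ^{μ,c}(I)` and `Γ^{μ,c}(I)` -/

section Complexes

variable (K : Type) [Field K] (n : ℕ)

/-- The simplicial complex `Δ^{μ,c}(I) = {F ⊆ [s] : μ ∖ (c + e_F) ∈ P(I)}` (vertices are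
`0, …, s-1`), for `μ = (d_0^{p_0}, …, d_{s-1}^{p_{s-1}}, 0^{p_s})` and `c ≤ p(μ)`. -/
def DeltaCx (I : Ideal (MvPolynomial (Fin n) K)) (s : ℕ) (d p c : ℕ → ℕ) :
    Set (Finset ℕ) :=
  {F | F ⊆ Finset.range s ∧
    mon K n (fun i => muMinus s d p (fun j => c j + eF F j) i.val) ∈ I}

/-- The Alexander dual complex `Γ^{μ,c}(I) = {F ⊆ [s] : μ ∖ (c + e_{[s]∖F}) ∈ O(I)}`. -/
def GammaCx (I : Ideal (MvPolynomial (Fin n) K)) (s : ℕ) (d p c : ℕ → ℕ) :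
    Set (Finset ℕ) :=
  {F | F ⊆ Finset.range s ∧
    mon K n (fun i => muMinus s d p
      (fun j => c j + (if j < s ∧ j ∉ F then 1 else 0)) i.val) ∉ I}

/-- `γ_i^{μ,c}(I) = dim_K H̃_{i-1}(Δ^{μ,c}(I); K)`. -/
noncomputable def gammaDim (I : Ideal (MvPolynomial (Fin n) K)) (s : ℕ) (d p c : ℕ → ℕ)
    (i : ℕ) : ℕ :=
  rhd0 K (DeltaCx K n I s d p c) i

end Complexes

/-! ## Multigraded Tor via the Koszul complex

For a monomial ideal `I`, the multidegree-`a` strand of the Koszul complex `K_•(I)` is the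
(shifted) reduced chain complex of the simplicial complex
`Δ_a^I = {F ⊆ [n] : a - e_F ≥ 0, x^{a - e_F} ∈ I}`, so that
`dim_K Tor_i(I, K)_a = dim_K H̃_{i-1}(Δ_a^I; K)`, and similarly for `R/I` with the
condition `x^{a-e_F} ∉ I`. -/

section Tor

variable (K : Type) [Field K] (n : ℕ)

/-- The Koszul simplicial complex of the ideal `I` in multidegree `a`. -/
def KosI (I : Ideal (MvPolynomial (Fin n) K)) (a : Fin n → ℕ) : Set (Finset ℕ) :=
  {F | F ⊆ Finset.range n ∧ (∀ i : Fin n, (i : ℕ) ∈ F → 1 ≤ a i) ∧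
    mon K n (fun i => a i - eF F i.val) ∈ I}

/-- The Koszul complex of `R/I` in multidegree `a`. -/
def KosQ (I : Ideal (MvPolynomial (Fin n) K)) (a : Fin n → ℕ) : Set (Finset ℕ) :=
  {F | F ⊆ Finset.range n ∧ (∀ i : Fin n, (i : ℕ) ∈ F → 1 ≤ a i) ∧
    mon K n (fun i => a i - eF F i.val) ∉ I}

/-- `dim_K Tor_i(I, K)_a`, for a monomial ideal `I` and a multidegree `a ∈ ℤ^n`
(components with a negative coordinate vanish, so only `a ∈ ℕ^n` is needed). -/
noncomputable def torDim (I : Ideal (MvPolynomial (Fin n) K)) (i : ℕ) (a : Fin n → ℕ) : ℕ :=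
  rhd0 K (KosI K n I a) i

/-- `dim_K Tor_i(R/I, K)_a` for a monomial ideal `I`. -/
noncomputable def torQDim (I : Ideal (MvPolynomial (Fin n) K)) (i : ℕ) (a : Fin n → ℕ) : ℕ :=
  rhd0 K (KosQ K n I a) i

/-- `dim_K Tor_i(I, K)_{⟨μ⟩}`: the sum of `dim_K Tor_i(I, K)_a` over all rearrangements `a`
of the partition `μ`. -/
noncomputable def torDimSym (I : Ideal (MvPolynomial (Fin n) K)) (i : ℕ) (μ : Fin n → ℕ) : ℕ :=
  ∑ a ∈ Finset.image (fun σ : Equiv.Perm (Fin n) => μ ∘ σ) Finset.univ, torDim K n I i a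

/-- `dim_K Tor_i(R/I, K)_{⟨μ⟩}`. -/
noncomputable def torQDimSym (I : Ideal (MvPolynomial (Fin n) K)) (i : ℕ) (μ : Fin n → ℕ) : ℕ :=
  ∑ a ∈ Finset.image (fun σ : Equiv.Perm (Fin n) => μ ∘ σ) Finset.univ, torQDim K n I i a

end Tor

/-! ## Extended partitions in `P_n^∞` and the dual generators of an `S_n`-invariant
monomial ideal -/

section ExtendedPartitions

variable (K : Type) [Field K] (n : ℕ)

/-- `ℓ(μ)`: the number of entries of `μ ∈ P_n^∞` equal to `∞`. -/
def ellInf (μ : Fin n → ℕ∞) : ℕ := (Finset.univ.filter fun i => μ i = ⊤).card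

/-- The largest finite entry of `μ ∈ P_n^∞` (i.e. the first finite entry, `μ` being
weakly decreasing). -/
def topVal (μ : Fin n → ℕ∞) : ℕ := Finset.univ.sup fun i => (μ i).toNat

/-- `μ^+ ∈ P_n`: each `∞` entry of `μ` is replaced by (largest finite entry)` + 1`. -/
def plusOf (μ : Fin n → ℕ∞) (i : Fin n) : ℕ :=
  if μ i = ⊤ then topVal n μ + 1 else (μ i).toNat

/-- `μ̃ = μ^+ + (0^{ℓ(μ)}, 1^{n - ℓ(μ)}) ∈ P_n`. -/
def tildeOf (μ : Fin n → ℕ∞) (i : Fin n) : ℕ :=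
  if μ i = ⊤ then topVal n μ + 1 else (μ i).toNat + 1

/-- The ideal `Q_μ = ∩_{σ ∈ S_n} σ((x_k^{μ_k + 1}, …, x_n^{μ_n + 1}))`, where
`μ_k, …, μ_n` are the finite entries of `μ ∈ P_n^∞`. -/
noncomputable def Qgen (μ : Fin n → ℕ∞) : Ideal (MvPolynomial (Fin n) K) :=
  ⨅ σ : Equiv.Perm (Fin n),
    Ideal.map (MvPolynomial.rename σ).toRingHom
      (Ideal.span {g | ∃ i : Fin n, μ i ≠ ⊤ ∧ g = MvPolynomial.X i ^ ((μ i).toNat + 1)})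

/-- `Λ` is the (finite) set of dual generators of `I`, i.e. `I = ∩_{μ ∈ Λ} Q_μ` is the
irredundant presentation of `I` by ideals `Q_μ`. -/
def IsDualPresentation (I : Ideal (MvPolynomial (Fin n) K))
    (Λ : Finset (Fin n → ℕ∞)) : Prop :=
  (∀ μ ∈ Λ, Antitone μ) ∧ (I = ⨅ μ ∈ Λ, Qgen K n μ) ∧
    ∀ μ ∈ Λ, I ≠ ⨅ ρ ∈ Λ, ⨅ _ : ρ ≠ μ, Qgen K n ρ

/-- The partial order `≼` on dual generators: `μ ≼ ρ` iff `μ̃ ≤ ρ̃` (componentwise) and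
`ℓ(μ) - ℓ(ρ) ≤ |ρ̃| - |μ̃|`. -/
def preceq (μ ρ : Fin n → ℕ∞) : Prop :=
  (∀ i, tildeOf n μ i ≤ tildeOf n ρ i) ∧
    (∑ i, tildeOf n μ i) + ellInf n μ ≤ (∑ i, tildeOf n ρ i) + ellInf n ρ

/-- The extended partition `ρ = (∞^{p_0}, d_1^{p_1}, …, d_s^{p_s}) ∈ P_n^∞`
(so `n = p 0 + p 1 + ⋯ + p s`), as a function of the position `i ∈ {0, …, n-1}`. -/
def rhoOf (s : ℕ) (d p : ℕ → ℕ) (i : ℕ) : ℕ∞ :=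
  if blkOf p (s + 1) i = 0 then ⊤ else ((d (blkOf p (s + 1) i) : ℕ) : ℕ∞)

end ExtendedPartitions

/-- The `S_n`-invariant monomial ideal `⟨λ^1, …, λ^r⟩_{S_n}` generated by the
partitions `L 0, …, L (r-1)`. -/
def symIdeal (K : Type) [Field K] (n r : ℕ) (L : Fin r → Fin n → ℕ) :
    Ideal (MvPolynomial (Fin n) K) :=
  Ideal.span {f | ∃ (j : Fin r) (σ : Equiv.Perm (Fin n)),
    f = MvPolynomial.rename σ (mon K n (L j))}

/-- The unsymmetrization `J = (x^{λ^1}, …, x^{λ^r})`. -/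
def unsymIdeal (K : Type) [Field K] (n r : ℕ) (L : Fin r → Fin n → ℕ) :
    Ideal (MvPolynomial (Fin n) K) :=
  Ideal.span {f | ∃ j : Fin r, f = mon K n (L j)}


/-! ### auxiliary machinery -/
section AuxA

variable (K : Type) [Field K] {α β : Type}

lemma finsupp_fd {ι : Type} [Finite ι] : Module.Finite K (ι →₀ K) := by
  cases nonempty_fintype ι
  exact Module.Finite.equiv (Finsupp.linearEquivFunOnFinite K K ι).symm

lemma chainIdx_finite [Finite α] (S : Set (α × Finset ℕ)) (N : ℕ)
    (hS : ∀ q ∈ S, q.2 ⊆ Finset.range N) (j : ℕ) : Finite (ChainIdx S j) := by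
  have hmem : ∀ q : ChainIdx S j, q.1.2 ∈ (Finset.range N).powerset := fun q =>
    Finset.mem_powerset.2 (hS q.1 q.2.1)
  exact Finite.of_injective (fun q : ChainIdx S j =>
    ((q.1.1, ⟨q.1.2, hmem q⟩) : α × {F // F ∈ (Finset.range N).powerset}))
    (by rintro ⟨⟨a,F⟩,hq⟩ ⟨⟨b,G⟩,hq'⟩ hEq; simp_all [Prod.ext_iff, Subtype.ext_iff]; rfl)


lemma finrank_sub_eq_of_maps {V W : Type} [AddCommGroup V] [Module K V]
    [AddCommGroup W] [Module K W] [Module.Finite K V] [Module.Finite K W]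
    (ZS BS : Submodule K V) (ZT BT : Submodule K W) (hBSle : BS ≤ ZS) (hBTle : BT ≤ ZT)
    (f : V →ₗ[K] W) (g : W →ₗ[K] V)
    (hfZ : ∀ x ∈ ZS, f x ∈ ZT) (hgZ : ∀ x ∈ ZT, g x ∈ ZS)
    (hfB : ∀ x ∈ BS, f x ∈ BT) (hgB : ∀ x ∈ BT, g x ∈ BS)
    (hgfx : ∀ x ∈ ZS, g (f x) = x) (hfgB : ∀ x ∈ ZT, f (g x) - x ∈ BT) :
    Module.finrank K ZS - Module.finrank K BS
      = Module.finrank K ZT - Module.finrank K BT := by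
  set NS := BS.comap ZS.subtype with hNS
  set NT := BT.comap ZT.subtype with hNT
  let fres : ZS →ₗ[K] ZT := f.restrict hfZ
  let gres : ZT →ₗ[K] ZS := g.restrict hgZ
  have hfN : NS ≤ NT.comap fres := by
    intro x hx
    simp only [hNS, hNT, Submodule.mem_comap] at hx ⊢
    exact hfB _ hx
  have hgN : NT ≤ NS.comap gres := by
    intro x hx
    simp only [hNS, hNT, Submodule.mem_comap] at hx ⊢
    exact hgB _ hx
  let φ : (ZS ⧸ NS) →ₗ[K] (ZT ⧸ NT) := Submodule.mapQ NS NT fres hfN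
  let ψ : (ZT ⧸ NT) →ₗ[K] (ZS ⧸ NS) := Submodule.mapQ NT NS gres hgN
  have h1 : ψ.comp φ = LinearMap.id := by
    apply Submodule.linearMap_qext
    ext x
    simp only [LinearMap.comp_apply, Submodule.mkQ_apply, φ, ψ, Submodule.mapQ_apply,
      LinearMap.id_apply]
    congr 1
    ext
    exact hgfx _ x.2
  have h2 : φ.comp ψ = LinearMap.id := by
    apply Submodule.linearMap_qext
    ext x
    simp only [LinearMap.comp_apply, Submodule.mkQ_apply, φ, ψ, Submodule.mapQ_apply,
      LinearMap.id_apply]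
    rw [Submodule.Quotient.eq]
    simp only [hNT, Submodule.mem_comap]
    exact hfgB x.1 x.2
  let e : (ZS ⧸ NS) ≃ₗ[K] (ZT ⧸ NT) := LinearEquiv.ofLinear φ ψ h2 h1
  have hq := e.finrank_eq
  have eNS : Module.finrank K NS = Module.finrank K BS :=
    (Submodule.comapSubtypeEquivOfLe hBSle).finrank_eq
  have eNT : Module.finrank K NT = Module.finrank K BT :=
    (Submodule.comapSubtypeEquivOfLe hBTle).finrank_eq
  have hS1 := Submodule.finrank_quotient_add_finrank NS
  have hT1 := Submodule.finrank_quotient_add_finrank NT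
  omega

lemma rhd_eq_of_homotopy (S : Set (α × Finset ℕ)) (T : Set (β × Finset ℕ))
    (hfinS : ∀ j, Finite (ChainIdx S j)) (hfinT : ∀ j, Finite (ChainIdx T j))
    (f : ∀ j, (ChainIdx S j →₀ K) →ₗ[K] (ChainIdx T j →₀ K))
    (g : ∀ j, (ChainIdx T j →₀ K) →ₗ[K] (ChainIdx S j →₀ K))
    (h : ∀ j, (ChainIdx T j →₀ K) →ₗ[K] (ChainIdx T (j+1) →₀ K))
    (hf : ∀ j, (bd K T j).comp (f (j+1)) = (f j).comp (bd K S j))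
    (hg : ∀ j, (bd K S j).comp (g (j+1)) = (g j).comp (bd K T j))
    (hgf : ∀ j, (g j).comp (f j) = LinearMap.id)
    (hfg0 : (f 0).comp (g 0) = LinearMap.id + (bd K T 0).comp (h 0))
    (hfg : ∀ j, (f (j+1)).comp (g (j+1))
        = LinearMap.id + ((bd K T (j+1)).comp (h (j+1)) + (h j).comp (bd K T j))) :
    ∀ j, rhd K S j = rhd K T j := by
  intro j
  haveI := hfinS j; haveI := hfinS (j+1); haveI := hfinT j; haveI := hfinT (j+1)
  haveI := finsupp_fd K (ι := ChainIdx S j); haveI := finsupp_fd K (ι := ChainIdx T j)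
  haveI := finsupp_fd K (ι := ChainIdx S (j+1)); haveI := finsupp_fd K (ι := ChainIdx T (j+1))
  set ZS := cycles K S j with hZS
  set ZT := cycles K T j with hZT
  set BS := (LinearMap.range (bd K S j) ⊓ ZS : Submodule K _) with hBS
  set BT := (LinearMap.range (bd K T j) ⊓ ZT : Submodule K _) with hBT
  -- f, g map cycles to cycles
  have hfZ : ∀ x ∈ ZS, f j x ∈ ZT := by
    cases j with
    | zero => intro x _; simp [hZT, cycles]
    | succ i =>
      intro x hx
      simp only [hZS, hZT, cycles, LinearMap.mem_ker] at hx ⊢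
      have := congrArg (fun φ => φ x) (hf i)
      simp only [LinearMap.comp_apply] at this
      rw [this, hx, map_zero]
  have hgZ : ∀ x ∈ ZT, g j x ∈ ZS := by
    cases j with
    | zero => intro x _; simp [hZS, cycles]
    | succ i =>
      intro x hx
      simp only [hZS, hZT, cycles, LinearMap.mem_ker] at hx ⊢
      have := congrArg (fun φ => φ x) (hg i)
      simp only [LinearMap.comp_apply] at this
      rw [this, hx, map_zero]
  have hfB : ∀ x ∈ BS, f j x ∈ BT := by
    rintro x ⟨⟨y, rfl⟩, hxZ⟩
    refine ⟨⟨f (j+1) y, ?_⟩, hfZ _ hxZ⟩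
    have := congrArg (fun φ => φ y) (hf j)
    simpa using this
  have hgB : ∀ x ∈ BT, g j x ∈ BS := by
    rintro x ⟨⟨y, rfl⟩, hxZ⟩
    refine ⟨⟨g (j+1) y, ?_⟩, hgZ _ hxZ⟩
    have := congrArg (fun φ => φ y) (hg j)
    simpa using this
  have hgfx : ∀ x, g j (f j x) = x := by
    intro x
    have := congrArg (fun φ => φ x) (hgf j)
    simpa using this
  have hfgB : ∀ x ∈ ZT, f j (g j x) - x ∈ BT := by
    cases j with
    | zero =>
      intro x hx
      have := congrArg (fun φ => φ x) hfg0
      simp only [LinearMap.comp_apply, LinearMap.add_apply, LinearMap.id_apply] at this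
      refine ⟨⟨h 0 x, ?_⟩, ?_⟩
      · rw [this]; abel
      · simp [hZT, cycles]
    | succ i =>
      intro x hx
      have hker : bd K T i x = 0 := by simpa [hZT, cycles] using hx
      have := congrArg (fun φ => φ x) (hfg i)
      simp only [LinearMap.comp_apply, LinearMap.add_apply, LinearMap.id_apply, hker,
        map_zero, add_zero] at this
      refine ⟨⟨h (i+1) x, ?_⟩, ?_⟩
      · rw [this]; abel
      · exact Submodule.sub_mem _ (hfZ _ (hgZ _ hx)) hx
  have := finrank_sub_eq_of_maps K ZS BS ZT BT inf_le_right inf_le_right (f j) (g j)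
    hfZ hgZ hfB hgB (fun x _ => hgfx x) hfgB
  unfold rhd
  rw [← hZS, ← hZT, ← hBS, ← hBT]
  exact this
end AuxA

section Toolkit

variable (K : Type) [Field K]

/-- down-closed collection -/
def Dc (Δ : Set (Finset ℕ)) : Prop := ∀ F ∈ Δ, ∀ G : Finset ℕ, G ⊆ F → G ∈ Δ

noncomputable def sgl (Δ : Set (Finset ℕ)) (j : ℕ) (F : Finset ℕ) : ChainIdx (lab Δ) j →₀ K :=
  if h : F ∈ Δ ∧ F.card = j then Finsupp.single ⟨((), F), h.1, h.2⟩ 1 else 0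

lemma single_eq_sgl (Δ : Set (Finset ℕ)) (j : ℕ) (q : ChainIdx (lab Δ) j) :
    Finsupp.single q (1 : K) = sgl K Δ j q.1.2 := by
  unfold sgl
  rw [dif_pos (⟨q.2.1, q.2.2⟩ : q.1.2 ∈ Δ ∧ q.1.2.card = j)]
  congr 1

lemma bd_sgl (Δ : Set (Finset ℕ)) (hdc : Dc Δ) (j : ℕ) (F : Finset ℕ)
    (hF : F ∈ Δ) (hc : F.card = j + 1) :
    bd K (lab Δ) j (sgl K Δ (j+1) F) =
      ∑ u ∈ F, ((-1 : K) ^ (F.filter (fun x => x ≤ u)).card) • sgl K Δ j (F.erase u) := by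
  unfold bd sgl
  rw [dif_pos ⟨hF, hc⟩]
  refine (Finsupp.linearCombination_single K _ _).trans ?_
  rw [one_smul]
  unfold bdElt
  refine Finset.sum_congr rfl fun u hu => ?_
  have h1 : F.erase u ∈ Δ := hdc F hF _ (Finset.erase_subset _ _)
  have h2 : (F.erase u).card = j := by
    rw [Finset.card_erase_of_mem hu, hc]; omega

  rw [dif_pos (⟨h1, h2⟩ : F.erase u ∈ Δ ∧ (F.erase u).card = j)]
  exact dif_pos (⟨(h1 : (((), F.erase u) : Unit × Finset ℕ) ∈ lab Δ), h2⟩ :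
      (((), F.erase u) : Unit × Finset ℕ) ∈ lab Δ ∧ (F.erase u).card = j)

lemma sgl_card_ne (Δ : Set (Finset ℕ)) (j : ℕ) (F : Finset ℕ) (h : F.card ≠ j) :
    sgl K Δ j F = (0 : ChainIdx (lab Δ) j →₀ K) := by
  unfold sgl; rw [dif_neg]; tauto

/-- reduce a linear-map equality to sgl basis computations -/
lemma lhom_ext_sgl {Δ : Set (Finset ℕ)} {M : Type} [AddCommGroup M] [Module K M]
    {j : ℕ} {φ ψ : (ChainIdx (lab Δ) j →₀ K) →ₗ[K] M}
    (h : ∀ F ∈ Δ, F.card = j → φ (sgl K Δ j F) = ψ (sgl K Δ j F)) : φ = ψ := by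
  apply Finsupp.lhom_ext
  intro q b
  have hb : (Finsupp.single q b) = b • Finsupp.single q (1:K) := by
    rw [Finsupp.smul_single', mul_one]
  rw [hb, map_smul, map_smul, single_eq_sgl, h _ q.2.1 q.2.2]

end Toolkit

section Relabel
variable (K : Type) [Field K]

lemma finset_preimage_image (e : ℕ → ℕ) (he : Function.Injective e) (s : Finset ℕ) :
    (s.image e).preimage e he.injOn = s := by
  ext x; simp [Finset.mem_preimage, he.eq_iff]

noncomputable def relF (e : ℕ → ℕ) (T : Set (Finset ℕ)) (S : Set (Finset ℕ)) (j : ℕ) :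
    (ChainIdx (lab S) j →₀ K) →ₗ[K] (ChainIdx (lab T) j →₀ K) :=
  Finsupp.linearCombination K (fun q : ChainIdx (lab S) j => sgl K T j (q.1.2.image e))

noncomputable def relG (e : ℕ → ℕ) (he : Function.Injective e) (S : Set (Finset ℕ))
    (T : Set (Finset ℕ)) (j : ℕ) :
    (ChainIdx (lab T) j →₀ K) →ₗ[K] (ChainIdx (lab S) j →₀ K) :=
  Finsupp.linearCombination K
    (fun q : ChainIdx (lab T) j => sgl K S j (q.1.2.preimage e he.injOn))

lemma relabel_rhd (S : Set (Finset ℕ)) (hdc : Dc S) (e : ℕ → ℕ) (he : StrictMono e)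
    (N : ℕ) (hb : ∀ F ∈ S, F ⊆ Finset.range N) :
    ∀ j, rhd K (lab S) j = rhd K (lab (Finset.image e '' S)) j := by
  set T : Set (Finset ℕ) := Finset.image e '' S with hT
  have hei : Function.Injective e := he.injective
  have hdcT : Dc T := by
    rintro F' ⟨F, hF, rfl⟩ G hG
    refine ⟨G.preimage e hei.injOn, hdc F hF _ ?_, ?_⟩
    · intro x hx
      have : e x ∈ F.image e := hG (Finset.mem_preimage.1 hx)
      obtain ⟨y, hy, hyx⟩ := Finset.mem_image.1 this
      rwa [← hei hyx]
    · ext x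
      simp only [Finset.mem_image, Finset.mem_preimage]
      constructor
      · rintro ⟨y, hy, rfl⟩; exact hy
      · intro hx
        obtain ⟨u, hu, rfl⟩ := Finset.mem_image.1 (hG hx)
        exact ⟨u, hx, rfl⟩
  -- the chain maps
  let f := fun j => relF K e T S j
  let g := fun j => relG K e hei S T j
  have f_sgl : ∀ j F (hF : F ∈ S) (hc : F.card = j),
      f j (sgl K S j F) = sgl K T j (F.image e) := by
    intro j F hF hc
    show relF K e T S j _ = _
    unfold relF sgl
    rw [dif_pos ⟨hF, hc⟩]
    exact (Finsupp.linearCombination_single K _ _).trans (one_smul K _)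
  have g_sgl : ∀ j F (hF : F ∈ T) (hc : F.card = j),
      g j (sgl K T j F) = sgl K S j (F.preimage e hei.injOn) := by
    intro j F hF hc
    show relG K e hei S T j _ = _
    unfold relG sgl
    rw [dif_pos ⟨hF, hc⟩]
    exact (Finsupp.linearCombination_single K _ _).trans (one_smul K _)
  have hmemT : ∀ F, F ∈ S → F.image e ∈ T := fun F hF => ⟨F, hF, rfl⟩
  have hcardT : ∀ F : Finset ℕ, (F.image e).card = F.card :=
    fun F => Finset.card_image_of_injective F hei
  have hf : ∀ j, (bd K (lab T) j).comp (f (j+1)) = (f j).comp (bd K (lab S) j) := by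
    intro j
    apply lhom_ext_sgl K
    intro F hF hc
    rw [LinearMap.comp_apply, LinearMap.comp_apply, f_sgl _ _ hF hc,
      bd_sgl K T hdcT j _ (hmemT F hF) (by rw [hcardT, hc]),
      bd_sgl K S hdc j F hF hc, map_sum]
    rw [Finset.sum_image (fun x _ y _ h => hei h)]
    refine Finset.sum_congr rfl fun u hu => ?_
    rw [map_smul, f_sgl j _ (hdc F hF _ (Finset.erase_subset _ _))
      (by rw [Finset.card_erase_of_mem hu, hc]; omega),
      Finset.image_erase hei]
    congr 2
    rw [Finset.filter_image]
    rw [Finset.card_image_of_injective _ hei]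
    congr 1
    apply Finset.filter_congr
    intro x _
    simp [he.le_iff_le]
  have hgf : ∀ j, (g j).comp (f j) = LinearMap.id := by
    intro j
    apply lhom_ext_sgl K
    intro F hF hc
    rw [LinearMap.comp_apply, f_sgl _ _ hF hc, g_sgl _ _ (hmemT F hF) (by rw [hcardT, hc]),
      finset_preimage_image e hei, LinearMap.id_apply]
  have hfg : ∀ j, (f j).comp (g j) = LinearMap.id := by
    intro j
    apply lhom_ext_sgl K
    rintro F' ⟨F, hF, rfl⟩ hc
    rw [LinearMap.comp_apply, g_sgl _ _ (hmemT F hF) hc, finset_preimage_image e hei,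
      f_sgl _ _ hF (by rw [← hcardT F, hc]), LinearMap.id_apply]
  have hg : ∀ j, (bd K (lab S) j).comp (g (j+1)) = (g j).comp (bd K (lab T) j) := by
    intro j
    calc (bd K (lab S) j).comp (g (j+1))
        = ((g j).comp (f j)).comp ((bd K (lab S) j).comp (g (j+1))) := by
          rw [hgf j, LinearMap.id_comp]
      _ = (g j).comp (((bd K (lab T) j).comp (f (j+1))).comp (g (j+1))) := by
          rw [hf j]; simp only [LinearMap.comp_assoc]
      _ = (g j).comp ((bd K (lab T) j).comp ((f (j+1)).comp (g (j+1)))) := by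
          simp only [LinearMap.comp_assoc]
      _ = (g j).comp (bd K (lab T) j) := by rw [hfg (j+1), LinearMap.comp_id]
  have hfinS : ∀ j, Finite (ChainIdx (lab S) j) :=
    chainIdx_finite (lab S) N (fun q hq => hb q.2 hq) 
  have hfinT : ∀ j, Finite (ChainIdx (lab T) j) := by
    refine chainIdx_finite (lab T) (e N) ?_
    rintro ⟨u, F'⟩ ⟨F, hF, rfl⟩ x hx
    obtain ⟨y, hy, rfl⟩ := Finset.mem_image.1 hx
    exact Finset.mem_range.2 (he (Finset.mem_range.1 (hb F hF hy)))
  exact rhd_eq_of_homotopy K (lab S) (lab T) hfinS hfinT f g (fun j => 0) hf hg hgf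
    (by rw [hfg 0]; simp) (fun j => by rw [hfg (j+1)]; simp)
end Relabel

section Fold
variable (K : Type) [Field K]

/-- parity helpers -/
lemma npow_eq_of_parity {R : Type} [Ring R] (a b : ℕ) (h : a % 2 = b % 2) :
    (-1 : R) ^ a = (-1 : R) ^ b := by
  rw [neg_one_pow_eq_pow_mod_two, h, ← neg_one_pow_eq_pow_mod_two]

lemma npow_add_eq_zero {R : Type} [Ring R] (a b : ℕ) (h : (a + 1) % 2 = b % 2) :
    (-1 : R) ^ a + (-1 : R) ^ b = 0 := by
  rw [npow_eq_of_parity b (a+1) h.symm, pow_succ]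
  simp

/-- card-filter helpers -/
lemma card_filter_erase (F : Finset ℕ) (p : ℕ → Prop) [DecidablePred p] {u : ℕ} (hu : u ∈ F) :
    ((F.erase u).filter p).card + (if p u then 1 else 0) = (F.filter p).card := by
  rw [Finset.filter_erase]
  by_cases hp : p u
  · rw [if_pos hp, Finset.card_erase_add_one (Finset.mem_filter.2 ⟨hu, hp⟩)]
  · rw [if_neg hp, Finset.erase_eq_of_notMem (fun hm => hp (Finset.mem_filter.1 hm).2), add_zero]

lemma card_filter_insert (F : Finset ℕ) (p : ℕ → Prop) [DecidablePred p] {u : ℕ} (hu : u ∉ F) :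
    ((insert u F).filter p).card = (F.filter p).card + (if p u then 1 else 0) := by
  rw [Finset.filter_insert]
  by_cases hp : p u
  · rw [if_pos hp, if_pos hp,
      Finset.card_insert_of_notMem (fun hm => hu (Finset.mem_filter.1 hm).1)]
  · rw [if_neg hp, if_neg hp, add_zero]

lemma card_filter_split (F : Finset ℕ) (p q r : ℕ → Prop)
    [DecidablePred p] [DecidablePred q] [DecidablePred r]
    (h1 : ∀ u, p u ↔ q u ∨ r u) (h2 : ∀ u, ¬(q u ∧ r u)) :
    (F.filter p).card = (F.filter q).card + (F.filter r).card := by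
  rw [← Finset.card_union_of_disjoint (Finset.disjoint_filter.2 (fun x _ hq hr => h2 x ⟨hq, hr⟩)),
      ← Finset.filter_or]
  congr 1
  apply Finset.filter_congr
  intro x _
  simp only [h1 x]

lemma card_filter_singleton (F : Finset ℕ) {u : ℕ} (hu : u ∈ F) :
    (F.filter (fun x => x = u)).card = 1 := by
  rw [Finset.filter_eq', if_pos hu, Finset.card_singleton]

/-- the subcomplex obtained by deleting the vertex `v` -/
def foldSub (S : Set (Finset ℕ)) (v : ℕ) : Set (Finset ℕ) := {F | F ∈ S ∧ v ∉ F}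

noncomputable def foldF (S : Set (Finset ℕ)) (v : ℕ) (j : ℕ) :
    (ChainIdx (lab (foldSub S v)) j →₀ K) →ₗ[K] (ChainIdx (lab S) j →₀ K) :=
  Finsupp.linearCombination K (fun q : ChainIdx (lab (foldSub S v)) j => sgl K S j q.1.2)

noncomputable def foldR (S : Set (Finset ℕ)) (v w : ℕ) (j : ℕ) :
    (ChainIdx (lab S) j →₀ K) →ₗ[K] (ChainIdx (lab (foldSub S v)) j →₀ K) :=
  Finsupp.linearCombination K (fun q : ChainIdx (lab S) j =>
    if v ∈ q.1.2 then
      (if w ∈ q.1.2 then 0 else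
        ((-1:K) ^ ((q.1.2.filter (fun u => v < u ∧ u < w)).card)) •
          sgl K (foldSub S v) j (insert w (q.1.2.erase v)))
    else sgl K (foldSub S v) j q.1.2)

noncomputable def foldH (S : Set (Finset ℕ)) (v w : ℕ) (j : ℕ) :
    (ChainIdx (lab S) j →₀ K) →ₗ[K] (ChainIdx (lab S) (j+1) →₀ K) :=
  Finsupp.linearCombination K (fun q : ChainIdx (lab S) j =>
    if v ∈ q.1.2 ∧ w ∉ q.1.2 then
      ((-1:K) ^ (((insert w q.1.2).filter (fun u => u ≤ w)).card + 1)) •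
        sgl K S (j+1) (insert w q.1.2)
    else 0)

variable {S : Set (Finset ℕ)} {v w : ℕ}

lemma foldSub_dc (hdc : Dc S) : Dc (foldSub S v) :=
  fun F hF G hG => ⟨hdc F hF.1 G hG, fun hv => hF.2 (hG hv)⟩

lemma foldF_sgl (j : ℕ) (F : Finset ℕ) (hF : F ∈ foldSub S v) (hc : F.card = j) :
    foldF K S v j (sgl K (foldSub S v) j F) = sgl K S j F := by
  unfold foldF sgl
  rw [dif_pos ⟨hF, hc⟩]
  exact (Finsupp.linearCombination_single K _ _).trans (one_smul K _)

lemma foldR_sgl (j : ℕ) (F : Finset ℕ) (hF : F ∈ S) (hc : F.card = j) :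
    foldR K S v w j (sgl K S j F) =
      if v ∈ F then
        (if w ∈ F then 0 else
          ((-1:K) ^ ((F.filter (fun u => v < u ∧ u < w)).card)) •
            sgl K (foldSub S v) j (insert w (F.erase v)))
      else sgl K (foldSub S v) j F := by
  unfold foldR sgl
  rw [dif_pos ⟨hF, hc⟩]
  exact (Finsupp.linearCombination_single K _ _).trans (one_smul K _)

lemma foldH_sgl (j : ℕ) (F : Finset ℕ) (hF : F ∈ S) (hc : F.card = j) :
    foldH K S v w j (sgl K S j F) =
      if v ∈ F ∧ w ∉ F then
        ((-1:K) ^ (((insert w F).filter (fun u => u ≤ w)).card + 1)) •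
          sgl K S (j+1) (insert w F)
      else 0 := by
  unfold foldH sgl
  rw [dif_pos ⟨hF, hc⟩]
  exact (Finsupp.linearCombination_single K _ _).trans (one_smul K _)

lemma fold_hf (hdc : Dc S) (j : ℕ) :
    (bd K (lab S) j).comp (foldF K S v (j+1)) = (foldF K S v j).comp (bd K (lab (foldSub S v)) j) := by
  apply lhom_ext_sgl K
  intro F hF hc
  rw [LinearMap.comp_apply, LinearMap.comp_apply, foldF_sgl K _ F hF hc,
    bd_sgl K S hdc j F hF.1 hc, bd_sgl K (foldSub S v) (foldSub_dc hdc) j F hF hc, map_sum]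
  refine Finset.sum_congr rfl fun u hu => ?_
  rw [map_smul, foldF_sgl K j _ (foldSub_dc hdc F hF _ (Finset.erase_subset _ _))
    (by rw [Finset.card_erase_of_mem hu, hc]; omega)]

lemma fold_hgf (j : ℕ) :
    (foldR K S v w j).comp (foldF K S v j) = LinearMap.id := by
  apply lhom_ext_sgl K
  intro F hF hc
  rw [LinearMap.comp_apply, foldF_sgl K _ F hF hc, foldR_sgl K j F hF.1 hc, if_neg hF.2,
    LinearMap.id_apply]

end Fold

section Fold2
variable (K : Type) [Field K]
variable {S : Set (Finset ℕ)} {v w : ℕ}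

lemma fold_G_mem (hdc : Dc S) (hvw : v < w)
    (hcone : ∀ F ∈ S, v ∈ F → insert w F ∈ S)
    {F : Finset ℕ} (hF : F ∈ S) (hv : v ∈ F) :
    insert w (F.erase v) ∈ foldSub S v := by
  constructor
  · refine hdc _ (hcone F hF hv) _ ?_
    intro x hx
    rcases Finset.mem_insert.1 hx with rfl | hx
    · exact Finset.mem_insert_self _ _
    · exact Finset.mem_insert_of_mem (Finset.erase_subset _ _ hx)
  · intro hmem
    rcases Finset.mem_insert.1 hmem with rfl | hmem
    · exact absurd rfl hvw.ne
    · exact Finset.notMem_erase _ _ hmem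

lemma fold_G_card (hvw : v < w) {F : Finset ℕ} (hv : v ∈ F) (hw : w ∉ F) :
    (insert w (F.erase v)).card = F.card := by
  have h1 : w ∉ F.erase v := fun h => hw (Finset.erase_subset _ _ h)
  have h2 : 0 < F.card := Finset.card_pos.2 ⟨v, hv⟩
  rw [Finset.card_insert_of_notMem h1, Finset.card_erase_of_mem hv]
  omega

lemma fold_hg (hdc : Dc S) (hvw : v < w) (hcone : ∀ F ∈ S, v ∈ F → insert w F ∈ S) (j : ℕ) :
    (bd K (lab (foldSub S v)) j).comp (foldR K S v w (j+1))
      = (foldR K S v w j).comp (bd K (lab S) j) := by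
  have hdc' : Dc (foldSub S v) := foldSub_dc hdc
  apply lhom_ext_sgl K
  intro F hF hc
  have herase_mem : ∀ u : ℕ, F.erase u ∈ S := fun u => hdc F hF _ (Finset.erase_subset _ _)
  have herase_card : ∀ u ∈ F, (F.erase u).card = j := fun u hu => by
    rw [Finset.card_erase_of_mem hu, hc]; omega
  rw [LinearMap.comp_apply, LinearMap.comp_apply, foldR_sgl K _ F hF hc,
    bd_sgl K S hdc j F hF hc, map_sum]
  simp only [map_smul]
  have hRval : ∀ u ∈ F, foldR K S v w j (sgl K S j (F.erase u)) =
      if v ∈ F.erase u then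
        (if w ∈ F.erase u then 0 else
          ((-1:K) ^ (((F.erase u).filter (fun x => v < x ∧ x < w)).card)) •
            sgl K (foldSub S v) j (insert w ((F.erase u).erase v)))
      else sgl K (foldSub S v) j (F.erase u) :=
    fun u hu => foldR_sgl K j _ (herase_mem u) (herase_card u hu)
  by_cases hv : v ∈ F
  · by_cases hw : w ∈ F
    · -- both v and w in F: LHS is zero, RHS cancels in pairs
      rw [if_pos hv, if_pos hw, map_zero]
      have hwv : w ∈ F.erase v := Finset.mem_erase.2 ⟨hvw.ne', hw⟩
      rw [← Finset.add_sum_erase F _ hv, ← Finset.add_sum_erase (F.erase v) _ hwv]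
      have hzero : ∀ u ∈ (F.erase v).erase w,
          ((-1:K) ^ (F.filter (fun x => x ≤ u)).card) •
            foldR K S v w j (sgl K S j (F.erase u)) = 0 := by
        intro u hu
        have huw : u ≠ w := (Finset.mem_erase.1 hu).1
        have huv : u ≠ v := (Finset.mem_erase.1 ((Finset.mem_erase.1 hu).2)).1
        have huF : u ∈ F := (Finset.mem_erase.1 ((Finset.mem_erase.1 hu).2)).2
        rw [hRval u huF, if_pos (Finset.mem_erase.2 ⟨Ne.symm huv, hv⟩),
          if_pos (Finset.mem_erase.2 ⟨Ne.symm huw, hw⟩), smul_zero]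
      rw [Finset.sum_eq_zero hzero, add_zero]
      -- the two remaining terms cancel
      rw [hRval v hv, if_neg (Finset.notMem_erase v F),
        hRval w (Finset.mem_of_mem_erase hwv), if_pos (Finset.mem_erase.2 ⟨hvw.ne, hv⟩),
        if_neg (Finset.notMem_erase w F)]
      rw [Finset.erase_right_comm (a := w) (b := v), Finset.insert_erase hwv]
      rw [smul_smul, ← pow_add, ← add_smul]
      have e1 : (F.filter (fun x => x ≤ w)).card
          = (F.filter (fun x => x ≤ v)).card + (F.filter (fun x => v < x ∧ x ≤ w)).card :=
        card_filter_split F _ _ _ (fun u => by omega) (fun u => by omega)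
      have e2 : (F.filter (fun x => v < x ∧ x ≤ w)).card
          = (F.filter (fun x => v < x ∧ x < w)).card + (F.filter (fun x => x = w)).card :=
        card_filter_split F _ _ _ (fun u => by constructor <;> (intro h; omega))
          (fun u => by omega)
      have e3 : (F.filter (fun x => x = w)).card = 1 := card_filter_singleton F hw
      have e4 : ((F.erase w).filter (fun x => v < x ∧ x < w)).card
            + (if v < w ∧ w < w then 1 else 0)
          = (F.filter (fun x => v < x ∧ x < w)).card := card_filter_erase F _ hw
      rw [if_neg (by omega)] at e4
      rw [npow_add_eq_zero _ _ (by omega), zero_smul]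
    · -- v ∈ F, w ∉ F
      rw [if_pos hv, if_neg hw, map_smul]
      have hGmem := fold_G_mem hdc hvw hcone hF hv
      have hGcard : (insert w (F.erase v)).card = j + 1 := by rw [fold_G_card hvw hv hw, hc]
      rw [bd_sgl K (foldSub S v) hdc' j _ hGmem hGcard]
      have hwG : w ∈ insert w (F.erase v) := Finset.mem_insert_self _ _
      have hwFv : w ∉ F.erase v := fun h => hw (Finset.erase_subset _ _ h)
      rw [← Finset.add_sum_erase _ _ hwG, Finset.erase_insert hwFv]
      rw [← Finset.add_sum_erase F _ hv]
      rw [hRval v hv, if_neg (Finset.notMem_erase v F)]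
      rw [smul_add, Finset.smul_sum]
      have hterm : ∀ u ∈ F.erase v,
          ((-1:K) ^ ((F.filter (fun x => v < x ∧ x < w)).card)) •
            (((-1:K) ^ ((insert w (F.erase v)).filter (fun x => x ≤ u)).card) •
              sgl K (foldSub S v) j ((insert w (F.erase v)).erase u))
          = ((-1:K) ^ (F.filter (fun x => x ≤ u)).card) •
              foldR K S v w j (sgl K S j (F.erase u)) := by
        intro u hu
        have huv : u ≠ v := (Finset.mem_erase.1 hu).1
        have huF : u ∈ F := (Finset.mem_erase.1 hu).2
        have huw : u ≠ w := fun h => hw (h ▸ huF)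
        rw [hRval u huF, if_pos (Finset.mem_erase.2 ⟨Ne.symm huv, hv⟩),
          if_neg (fun h => hw (Finset.erase_subset _ _ h))]
        have hface : (insert w (F.erase v)).erase u = insert w ((F.erase u).erase v) := by
          rw [Finset.erase_insert_of_ne (Ne.symm huw), Finset.erase_right_comm]
        rw [hface, smul_smul, smul_smul, ← pow_add, ← pow_add]
        apply congrArg (fun z => z • _)
        apply npow_eq_of_parity
        have f1 : ((insert w (F.erase v)).filter (fun x => x ≤ u)).card
            = ((F.erase v).filter (fun x => x ≤ u)).card + (if w ≤ u then 1 else 0) :=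
          card_filter_insert _ _ hwFv
        have f2 : ((F.erase v).filter (fun x => x ≤ u)).card + (if v ≤ u then 1 else 0)
            = (F.filter (fun x => x ≤ u)).card := card_filter_erase F _ hv
        have f3 : ((F.erase u).filter (fun x => v < x ∧ x < w)).card
              + (if v < u ∧ u < w then 1 else 0)
            = (F.filter (fun x => v < x ∧ x < w)).card := card_filter_erase F _ huF
        split_ifs at f1 f2 f3 <;> omega
      rw [Finset.sum_congr rfl hterm]
      apply congrArg (fun z => z + _)
      rw [smul_smul, ← pow_add]
      apply congrArg (fun z => z • _)
      apply npow_eq_of_parity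
      have g1 : ((insert w (F.erase v)).filter (fun x => x ≤ w)).card
          = ((F.erase v).filter (fun x => x ≤ w)).card + (if w ≤ w then 1 else 0) :=
        card_filter_insert _ _ hwFv
      have g2 : ((F.erase v).filter (fun x => x ≤ w)).card + (if v ≤ w then 1 else 0)
          = (F.filter (fun x => x ≤ w)).card := card_filter_erase F _ hv
      have e1 : (F.filter (fun x => x ≤ w)).card
          = (F.filter (fun x => x ≤ v)).card + (F.filter (fun x => v < x ∧ x ≤ w)).card :=
        card_filter_split F _ _ _ (fun u => by omega) (fun u => by omega)
      have e2 : (F.filter (fun x => v < x ∧ x ≤ w)).card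
          = (F.filter (fun x => v < x ∧ x < w)).card + (F.filter (fun x => x = w)).card :=
        card_filter_split F _ _ _ (fun u => by constructor <;> (intro h; omega))
          (fun u => by omega)
      have e3 : (F.filter (fun x => x = w)).card = 0 := by
        rw [Finset.filter_eq', if_neg hw, Finset.card_empty]
      rw [if_pos (le_refl w)] at g1
      rw [if_pos hvw.le] at g2
      omega
  · -- v ∉ F
    rw [if_neg hv, bd_sgl K (foldSub S v) (foldSub_dc hdc) j F ⟨hF, hv⟩ hc]
    refine Finset.sum_congr rfl fun u hu => ?_
    rw [hRval u hu, if_neg (fun h => hv (Finset.erase_subset _ _ h))]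
end Fold2

section Fold3
variable (K : Type) [Field K]
variable {S : Set (Finset ℕ)} {v w : ℕ}

lemma npow_odd {R : Type} [Ring R] (a : ℕ) (h : a % 2 = 1) : (-1 : R) ^ a = -1 := by
  rw [neg_one_pow_eq_pow_mod_two, h, pow_one]

lemma assemble {M : Type} [AddCommGroup M] (a b s1 s2 : M) (h : s1 + s2 = 0) :
    b + (-b + (a + s1) + s2) = a := by
  have h2 : b + (-b + (a + s1) + s2) = a + (s1 + s2) := by abel
  rw [h2, h, add_zero]

lemma fold_hfg0 (hdc : Dc S) (hvw : v < w) :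
    (foldF K S v 0).comp (foldR K S v w 0)
      = LinearMap.id + (bd K (lab S) 0).comp (foldH K S v w 0) := by
  apply lhom_ext_sgl K
  intro F hF hc
  have hF0 : F = ∅ := Finset.card_eq_zero.1 hc
  subst hF0
  simp only [LinearMap.comp_apply, LinearMap.add_apply, LinearMap.id_apply]
  rw [foldR_sgl K _ _ hF hc, if_neg (Finset.notMem_empty v),
    foldF_sgl K _ _ ⟨hF, Finset.notMem_empty v⟩ hc,
    foldH_sgl K _ _ hF hc, if_neg (fun h => Finset.notMem_empty v h.1), map_zero, add_zero]

lemma fold_hfg (hdc : Dc S) (hvw : v < w) (hcone : ∀ F ∈ S, v ∈ F → insert w F ∈ S) (j : ℕ) :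
    (foldF K S v (j+1)).comp (foldR K S v w (j+1))
      = LinearMap.id + ((bd K (lab S) (j+1)).comp (foldH K S v w (j+1))
          + (foldH K S v w j).comp (bd K (lab S) j)) := by
  apply lhom_ext_sgl K
  intro F hF hc
  have herase_mem : ∀ u : ℕ, F.erase u ∈ S := fun u => hdc F hF _ (Finset.erase_subset _ _)
  have herase_card : ∀ u ∈ F, (F.erase u).card = j := fun u hu => by
    rw [Finset.card_erase_of_mem hu, hc]; omega
  simp only [LinearMap.comp_apply, LinearMap.add_apply, LinearMap.id_apply]
  rw [foldR_sgl K _ F hF hc]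
  have hHbd_expand : foldH K S v w j (bd K (lab S) j (sgl K S (j+1) F))
      = ∑ u ∈ F, ((-1:K) ^ ((F.filter (fun x => x ≤ u)).card)) •
          foldH K S v w j (sgl K S j (F.erase u)) := by
    rw [bd_sgl K S hdc j F hF hc, map_sum]
    simp only [map_smul]
  by_cases hv : v ∈ F
  · by_cases hw : w ∈ F
    · -- v,w ∈ F : LHS = 0, RHS = sgl F + 0 + (- sgl F)
      rw [if_pos hv, if_pos hw, map_zero]
      rw [foldH_sgl K _ F hF hc, if_neg (fun h => h.2 hw), map_zero, hHbd_expand]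
      have hwv : w ∈ F.erase v := Finset.mem_erase.2 ⟨hvw.ne', hw⟩
      rw [← Finset.add_sum_erase F _ hw]
      have hzero : ∀ u ∈ F.erase w,
          ((-1:K) ^ ((F.filter (fun x => x ≤ u)).card)) •
            foldH K S v w j (sgl K S j (F.erase u)) = 0 := by
        intro u hu
        have huw : u ≠ w := (Finset.mem_erase.1 hu).1
        have huF : u ∈ F := (Finset.mem_erase.1 hu).2
        rw [foldH_sgl K _ _ (herase_mem u) (herase_card u huF),
          if_neg (fun h => h.2 (Finset.mem_erase.2 ⟨Ne.symm huw, hw⟩)), smul_zero]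
      rw [Finset.sum_eq_zero hzero, add_zero]
      rw [foldH_sgl K _ _ (herase_mem w) (herase_card w hw),
        if_pos ⟨Finset.mem_erase.2 ⟨hvw.ne, hv⟩, Finset.notMem_erase w F⟩,
        Finset.insert_erase hw]
      rw [smul_smul, ← pow_add,
        show ((-1:K) ^ ((F.filter (fun x => x ≤ w)).card
            + ((F.filter (fun x => x ≤ w)).card + 1))) = -1 from npow_odd _ (by omega),
        neg_one_smul]
      abel
    · -- v ∈ F, w ∉ F : the main case
      have hGmem := fold_G_mem hdc hvw hcone hF hv
      have hGcard : (insert w (F.erase v)).card = j + 1 := by rw [fold_G_card hvw hv hw, hc]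
      have hAmem : insert w F ∈ S := hcone F hF hv
      have hAcard : (insert w F).card = j + 1 + 1 := by
        rw [Finset.card_insert_of_notMem hw, hc]
      have hwFv : w ∉ F.erase v := fun h => hw (Finset.erase_subset _ _ h)
      rw [if_pos hv, if_neg hw, map_smul, foldF_sgl K _ _ hGmem hGcard]
      -- expand bd ∘ foldH
      have hbdH : bd K (lab S) (j+1) (foldH K S v w (j+1) (sgl K S (j+1) F))
          = ∑ u ∈ insert w F, ((-1:K) ^ (((insert w F).filter (fun x => x ≤ w)).card + 1)) •
              (((-1:K) ^ (((insert w F).filter (fun x => x ≤ u)).card)) •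
                sgl K S (j+1) ((insert w F).erase u)) := by
        rw [foldH_sgl K _ F hF hc, if_pos ⟨hv, hw⟩, map_smul,
          bd_sgl K S hdc (j+1) _ hAmem hAcard, Finset.smul_sum]
      rw [hbdH, Finset.sum_insert hw, ← Finset.add_sum_erase F _ hv]
      -- the u = w term is -sgl F
      have hterm_w : ((-1:K) ^ (((insert w F).filter (fun x => x ≤ w)).card + 1)) •
            (((-1:K) ^ (((insert w F).filter (fun x => x ≤ w)).card)) •
              sgl K S (j+1) ((insert w F).erase w))
          = -(sgl K S (j+1) F) := by
        rw [Finset.erase_insert hw, smul_smul, ← pow_add,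
          show ((-1:K) ^ ((((insert w F).filter (fun x => x ≤ w)).card + 1)
              + ((insert w F).filter (fun x => x ≤ w)).card)) = -1 from npow_odd _ (by omega),
          neg_one_smul]
      -- the u = v term matches the LHS
      have hterm_v : ((-1:K) ^ (((insert w F).filter (fun x => x ≤ w)).card + 1)) •
            (((-1:K) ^ (((insert w F).filter (fun x => x ≤ v)).card)) •
              sgl K S (j+1) ((insert w F).erase v))
          = ((-1:K) ^ ((F.filter (fun x => v < x ∧ x < w)).card)) •
              sgl K S (j+1) (insert w (F.erase v)) := by
        rw [Finset.erase_insert_of_ne hvw.ne', smul_smul, ← pow_add]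
        apply congrArg (fun z => z • _)
        apply npow_eq_of_parity
        have i1 : ((insert w F).filter (fun x => x ≤ v)).card
            = (F.filter (fun x => x ≤ v)).card + (if w ≤ v then 1 else 0) :=
          card_filter_insert F _ hw
        have i2 : ((insert w F).filter (fun x => x ≤ w)).card
            = (F.filter (fun x => x ≤ w)).card + (if w ≤ w then 1 else 0) :=
          card_filter_insert F _ hw
        have e1 : (F.filter (fun x => x ≤ w)).card
            = (F.filter (fun x => x ≤ v)).card + (F.filter (fun x => v < x ∧ x ≤ w)).card :=
          card_filter_split F _ _ _ (fun u => by omega) (fun u => by omega)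
        have e2 : (F.filter (fun x => v < x ∧ x ≤ w)).card
            = (F.filter (fun x => v < x ∧ x < w)).card + (F.filter (fun x => x = w)).card :=
          card_filter_split F _ _ _ (fun u => by constructor <;> (intro h; omega))
            (fun u => by omega)
        have e3 : (F.filter (fun x => x = w)).card = 0 := by
          rw [Finset.filter_eq', if_neg hw, Finset.card_empty]
        rw [if_neg (by omega)] at i1
        rw [if_pos (le_refl w)] at i2
        omega
      rw [hterm_w, hterm_v]
      -- expand foldH ∘ bd, pull out the u = v term (which vanishes)
      rw [hHbd_expand, ← Finset.add_sum_erase F _ hv,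
        foldH_sgl K _ _ (herase_mem v) (herase_card v hv),
        if_neg (fun h => (Finset.notMem_erase v F) h.1), smul_zero, zero_add]
      -- remaining terms cancel pairwise
      have hcancel : ∀ u ∈ F.erase v,
          ((-1:K) ^ (((insert w F).filter (fun x => x ≤ w)).card + 1)) •
              (((-1:K) ^ (((insert w F).filter (fun x => x ≤ u)).card)) •
                sgl K S (j+1) ((insert w F).erase u))
            + ((-1:K) ^ ((F.filter (fun x => x ≤ u)).card)) •
                foldH K S v w j (sgl K S j (F.erase u)) = 0 := by
        intro u hu
        have huv : u ≠ v := (Finset.mem_erase.1 hu).1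
        have huF : u ∈ F := (Finset.mem_erase.1 hu).2
        have huw : u ≠ w := fun h => hw (h ▸ huF)
        have hface : (insert w F).erase u = insert w (F.erase u) :=
          Finset.erase_insert_of_ne (Ne.symm huw)
        rw [foldH_sgl K _ _ (herase_mem u) (herase_card u huF),
          if_pos ⟨Finset.mem_erase.2 ⟨Ne.symm huv, hv⟩,
            fun h => hw (Finset.erase_subset _ _ h)⟩]
        have k2 : (((insert w F).erase u).filter (fun x => x ≤ w)).card
              + (if u ≤ w then 1 else 0)
            = ((insert w F).filter (fun x => x ≤ w)).card :=
          card_filter_erase (insert w F) _ (Finset.mem_insert_of_mem huF)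
        rw [hface] at k2
        have k1 : ((insert w F).filter (fun x => x ≤ u)).card
            = (F.filter (fun x => x ≤ u)).card + (if w ≤ u then 1 else 0) :=
          card_filter_insert F _ hw
        rw [hface, smul_smul, smul_smul, ← pow_add, ← pow_add, ← add_smul,
          npow_add_eq_zero _ _ (by split_ifs at k1 k2 <;> omega), zero_smul]
      -- now assemble
      have hsum : (∑ x ∈ F.erase v,
            ((-1:K) ^ (((insert w F).filter (fun x => x ≤ w)).card + 1)) •
              (((-1:K) ^ (((insert w F).filter (fun y => y ≤ x)).card)) •
                sgl K S (j+1) ((insert w F).erase x)))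
          + (∑ x ∈ F.erase v, ((-1:K) ^ ((F.filter (fun y => y ≤ x)).card)) •
              foldH K S v w j (sgl K S j (F.erase x))) = 0 := by
        rw [← Finset.sum_add_distrib]
        exact Finset.sum_eq_zero hcancel
      exact (assemble _ _ _ _ hsum).symm
  · -- v ∉ F
    rw [if_neg hv, foldF_sgl K _ F ⟨hF, hv⟩ hc,
      foldH_sgl K _ F hF hc, if_neg (fun h => hv h.1), map_zero, hHbd_expand]
    have hzero : ∀ u ∈ F,
        ((-1:K) ^ ((F.filter (fun x => x ≤ u)).card)) •
          foldH K S v w j (sgl K S j (F.erase u)) = 0 := by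
      intro u hu
      rw [foldH_sgl K _ _ (herase_mem u) (herase_card u hu),
        if_neg (fun h => hv (Finset.erase_subset _ _ h.1)), smul_zero]
    rw [Finset.sum_eq_zero hzero]
    abel
end Fold3

section BlockLemmas

lemma cumsum_mono (p : ℕ → ℕ) {a b : ℕ} (h : a ≤ b) : cumsum p a ≤ cumsum p b :=
  Finset.sum_le_sum_of_subset (Finset.range_subset_range.2 h)

lemma cumsum_succ (p : ℕ → ℕ) (k : ℕ) : cumsum p (k+1) = cumsum p k + p k :=
  Finset.sum_range_succ _ _

lemma cumsum_zero (p : ℕ → ℕ) : cumsum p 0 = 0 := rfl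

lemma blkOf_eq (p : ℕ → ℕ) (s k i : ℕ) (hk : k ≤ s) (h1 : cumsum p k ≤ i)
    (h2 : i < cumsum p (k+1)) : blkOf p s i = k := by
  unfold blkOf
  have hfil : (Finset.range s).filter (fun k' => cumsum p (k'+1) ≤ i) = Finset.range k := by
    ext k'
    simp only [Finset.mem_filter, Finset.mem_range]
    constructor
    · rintro ⟨hks, hle⟩
      by_contra hcon
      push_neg at hcon
      have : cumsum p (k+1) ≤ cumsum p (k'+1) := cumsum_mono p (by omega)
      omega
    · intro hkk
      have h3 : cumsum p (k'+1) ≤ cumsum p k := cumsum_mono p (by omega)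
      exact ⟨by omega, by omega⟩
  rw [hfil, Finset.card_range]

lemma block_exists (p : ℕ → ℕ) (s i : ℕ) (h : i < cumsum p (s+1)) :
    ∃ k, k ≤ s ∧ cumsum p k ≤ i ∧ i < cumsum p (k+1) := by
  induction s with
  | zero => exact ⟨0, le_refl 0, by rw [cumsum_zero]; omega, h⟩
  | succ t ih =>
    by_cases hc : i < cumsum p (t+1)
    · obtain ⟨k, h1, h2, h3⟩ := ih hc
      exact ⟨k, by omega, h2, h3⟩
    · exact ⟨t+1, le_refl _, by omega, h⟩

lemma blkOf_spec (p : ℕ → ℕ) (s i : ℕ) (h : i < cumsum p (s+1)) :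
    blkOf p s i ≤ s ∧ cumsum p (blkOf p s i) ≤ i ∧ i < cumsum p (blkOf p s i + 1) := by
  obtain ⟨k, h1, h2, h3⟩ := block_exists p s i h
  rw [blkOf_eq p s k i h1 h2 h3]
  exact ⟨h1, h2, h3⟩

lemma d_lt (d : ℕ → ℕ) (s : ℕ) (hd : ∀ k, k + 1 < s → d (k+1) < d k) :
    ∀ k k', k < k' → k' < s → d k' < d k := by
  intro k k' hlt hs
  induction k' with
  | zero => omega
  | succ t ih =>
    have hdt : d (t+1) < d t := hd t hs
    rcases Nat.eq_or_lt_of_le (Nat.lt_succ_iff.1 hlt) with h | h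
    · rw [h]; exact hdt
    · exact lt_trans hdt (ih h (by omega))

end BlockLemmas

section MonLemmas
variable (K : Type) [Field K] (n r : ℕ) (L : Fin r → Fin n → ℕ)

lemma mem_unsym_iff (a : Fin n → ℕ) :
    mon K n a ∈ unsymIdeal K n r L ↔ ∃ j : Fin r, ∀ i, L j i ≤ a i := by
  unfold unsymIdeal mon
  have hset : {f : MvPolynomial (Fin n) K |
        ∃ j : Fin r, f = MvPolynomial.monomial (Finsupp.equivFunOnFinite.symm (L j)) (1:K)}
      = (fun s => MvPolynomial.monomial s (1:K)) ''
          {s : Fin n →₀ ℕ | ∃ j : Fin r, s = Finsupp.equivFunOnFinite.symm (L j)} := by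
    ext f
    simp only [Set.mem_setOf_eq, Set.mem_image]
    constructor
    · rintro ⟨j, rfl⟩
      exact ⟨Finsupp.equivFunOnFinite.symm (L j), ⟨j, rfl⟩, rfl⟩
    · rintro ⟨t, ⟨j, rfl⟩, rfl⟩
      exact ⟨j, rfl⟩
  rw [hset, MvPolynomial.mem_ideal_span_monomial_image]
  have hsupp : (MvPolynomial.monomial (Finsupp.equivFunOnFinite.symm a) (1:K)).support
      = {Finsupp.equivFunOnFinite.symm a} := by
    rw [MvPolynomial.support_monomial, if_neg one_ne_zero]
  rw [hsupp]
  simp only [Finset.mem_singleton, forall_eq, Set.mem_setOf_eq]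
  constructor
  · rintro ⟨si, ⟨j, rfl⟩, hle⟩
    exact ⟨j, fun i => by simpa using Finsupp.le_def.1 hle i⟩
  · rintro ⟨j, hle⟩
    exact ⟨_, ⟨j, rfl⟩, Finsupp.le_def.2 (fun i => by simpa using hle i)⟩

lemma mem_sym_iff (a : Fin n → ℕ) :
    mon K n a ∈ symIdeal K n r L
      ↔ ∃ (j : Fin r) (σ : Equiv.Perm (Fin n)), ∀ i, L j (σ i) ≤ a i := by
  unfold symIdeal mon
  have hset : {f : MvPolynomial (Fin n) K |
        ∃ (j : Fin r) (σ : Equiv.Perm (Fin n)),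
          f = MvPolynomial.rename σ (MvPolynomial.monomial (Finsupp.equivFunOnFinite.symm (L j)) (1:K))}
      = (fun s => MvPolynomial.monomial s (1:K)) ''
          {s : Fin n →₀ ℕ | ∃ (j : Fin r) (σ : Equiv.Perm (Fin n)),
            s = Finsupp.mapDomain σ (Finsupp.equivFunOnFinite.symm (L j))} := by
    ext f
    simp only [Set.mem_setOf_eq, Set.mem_image]
    constructor
    · rintro ⟨j, σ, rfl⟩
      refine ⟨_, ⟨j, σ, rfl⟩, ?_⟩
      rw [MvPolynomial.rename_monomial]
    · rintro ⟨t, ⟨j, σ, rfl⟩, rfl⟩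
      exact ⟨j, σ, by rw [MvPolynomial.rename_monomial]⟩
  rw [hset, MvPolynomial.mem_ideal_span_monomial_image]
  have hsupp : (MvPolynomial.monomial (Finsupp.equivFunOnFinite.symm a) (1:K)).support
      = {Finsupp.equivFunOnFinite.symm a} := by
    rw [MvPolynomial.support_monomial, if_neg one_ne_zero]
  rw [hsupp]
  simp only [Finset.mem_singleton, forall_eq, Set.mem_setOf_eq]
  constructor
  · rintro ⟨si, ⟨j, σ, rfl⟩, hle⟩
    refine ⟨j, σ.symm, fun i => ?_⟩
    have := Finsupp.le_def.1 hle i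
    rwa [Finsupp.mapDomain_equiv_apply (f := σ), Finsupp.coe_equivFunOnFinite_symm] at this
  · rintro ⟨j, σ, hle⟩
    refine ⟨_, ⟨j, σ.symm, rfl⟩, Finsupp.le_def.2 (fun i => ?_)⟩
    rw [Finsupp.mapDomain_equiv_apply (f := σ.symm), Finsupp.coe_equivFunOnFinite_symm,
      Equiv.symm_symm]
    exact hle i

lemma perm_le_of_antitone (n : ℕ) (u a : Fin n → ℕ) (hu : Antitone u) (ha : Antitone a)
    (σ : Equiv.Perm (Fin n)) (h : ∀ i, u (σ i) ≤ a i) : ∀ i, u i ≤ a i := by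
  intro i
  have hpig : ∃ t : Fin n, i ≤ t ∧ σ t ≤ i := by
    by_contra hcon
    push_neg at hcon
    have hmaps : ∀ t ∈ Finset.Ici i, σ t ∈ Finset.Ioi i := by
      intro t ht
      exact Finset.mem_Ioi.2 (hcon t (Finset.mem_Ici.1 ht))
    have hcard := Finset.card_le_card_of_injOn σ hmaps (σ.injective.injOn)
    rw [Fin.card_Ici, Fin.card_Ioi] at hcard
    have : (i : ℕ) < n := i.isLt
    omega
  obtain ⟨t, ht1, ht2⟩ := hpig
  exact le_trans (hu ht2) (le_trans (h t) (ha ht1))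

lemma mem_sym_iff_of_antitone (hL : ∀ j, Antitone (L j)) (a : Fin n → ℕ) (ha : Antitone a) :
    mon K n a ∈ symIdeal K n r L ↔ ∃ j : Fin r, ∀ i, L j i ≤ a i := by
  rw [mem_sym_iff]
  constructor
  · rintro ⟨j, σ, h⟩
    exact ⟨j, perm_le_of_antitone n (L j) a (hL j) ha σ h⟩
  · rintro ⟨j, h⟩
    exact ⟨j, 1, fun i => by simpa using h i⟩

end MonLemmas

section FoldInd
variable (K : Type) [Field K]

lemma rhd_congr (S T : Set (Finset ℕ)) (h : S = T) (j : ℕ) :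
    rhd K (lab S) j = rhd K (lab T) j := by rw [h]

lemma fold_rhd {S : Set (Finset ℕ)} {v w : ℕ} (hdc : Dc S) (hvw : v < w)
    (hcone : ∀ F ∈ S, v ∈ F → insert w F ∈ S) (N : ℕ)
    (hb : ∀ F ∈ S, F ⊆ Finset.range N) (j : ℕ) :
    rhd K (lab (foldSub S v)) j = rhd K (lab S) j := by
  have hfinT : ∀ i, Finite (ChainIdx (lab S) i) :=
    chainIdx_finite (lab S) N (fun q hq => hb q.2 hq)
  have hfinS : ∀ i, Finite (ChainIdx (lab (foldSub S v)) i) :=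
    chainIdx_finite _ N (fun q hq => hb q.2 hq.1)
  exact rhd_eq_of_homotopy K _ _ hfinS hfinT (fun i => foldF K S v i)
    (fun i => foldR K S v w i) (fun i => foldH K S v w i)
    (fun i => fold_hf K hdc i) (fun i => fold_hg K hdc hvw hcone i)
    (fun i => fold_hgf K i) (fold_hfg0 K hdc hvw) (fun i => fold_hfg K hdc hvw hcone i) j

lemma fold_induction (S₀ : Set (Finset ℕ)) (hdc : Dc S₀) (N : ℕ)
    (hb : ∀ F ∈ S₀, F ⊆ Finset.range N) (W : ℕ → ℕ) (T : Finset ℕ)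
    (hT : ∀ x ∈ T, x < W x ∧ W x ∉ T ∧ (∀ F ∈ S₀, x ∈ F → insert (W x) F ∈ S₀)) (j : ℕ) :
    rhd K (lab {F | F ∈ S₀ ∧ ∀ x ∈ T, x ∉ F}) j = rhd K (lab S₀) j := by
  classical
  revert hT
  induction T using Finset.induction_on with
  | empty =>
    intro _
    exact rhd_congr K _ _ (by ext F; simp) j
  | @insert a T' haT' ih =>
    intro hT
    have heq : {F | F ∈ S₀ ∧ ∀ x ∈ insert a T', x ∉ F}
        = foldSub {F | F ∈ S₀ ∧ ∀ x ∈ T', x ∉ F} a := by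
      ext F
      simp only [Set.mem_setOf_eq, foldSub, Finset.mem_insert]
      constructor
      · rintro ⟨h1, h2⟩
        exact ⟨⟨h1, fun x hx => h2 x (Or.inr hx)⟩, h2 a (Or.inl rfl)⟩
      · rintro ⟨⟨h1, h2⟩, h3⟩
        exact ⟨h1, fun x hx => hx.elim (fun h => h ▸ h3) (h2 x)⟩
    have hdc1 : Dc {F | F ∈ S₀ ∧ ∀ x ∈ T', x ∉ F} :=
      fun F hF G hG => ⟨hdc F hF.1 G hG, fun x hx hxG => hF.2 x hx (hG hxG)⟩
    have ha := hT a (Finset.mem_insert_self a T')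
    have hcone1 : ∀ F ∈ {F | F ∈ S₀ ∧ ∀ x ∈ T', x ∉ F}, a ∈ F →
        insert (W a) F ∈ {F | F ∈ S₀ ∧ ∀ x ∈ T', x ∉ F} := by
      rintro F ⟨hF1, hF2⟩ haF
      refine ⟨ha.2.2 F hF1 haF, fun x hx hmem => ?_⟩
      rcases Finset.mem_insert.1 hmem with rfl | hmem
      · exact ha.2.1 (Finset.mem_insert_of_mem hx)
      · exact hF2 x hx hmem
    rw [rhd_congr K _ _ heq j,
      fold_rhd K hdc1 ha.1 hcone1 N (fun F hF => hb F hF.1) j]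
    exact ih (fun x hx => ⟨(hT x (Finset.mem_insert_of_mem hx)).1,
      fun hmem => (hT x (Finset.mem_insert_of_mem hx)).2.1 (Finset.mem_insert_of_mem hmem),
      (hT x (Finset.mem_insert_of_mem hx)).2.2⟩)
end FoldInd

section MuLemmas
variable (s : ℕ) (d p : ℕ → ℕ)

/-- position of the last element of block `k` (for `k < s`), large dummy values otherwise -/
def ehat (p : ℕ → ℕ) (s n : ℕ) (k : ℕ) : ℕ := if k < s then cumsum p (k+1) - 1 else n + k

variable {s d p}

lemma cumsum_pos (hppos : ∀ k, k < s → 0 < p k) {k : ℕ} (hk : k < s) :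
    cumsum p k + 1 ≤ cumsum p (k+1) := by
  have := cumsum_succ p k
  have := hppos k hk
  omega

lemma ehat_blk (hppos : ∀ k, k < s → 0 < p k) {n k : ℕ} (hk : k < s) :
    blkOf p s (ehat p s n k) = k := by
  have h1 := cumsum_pos hppos hk
  have : ehat p s n k = cumsum p (k+1) - 1 := if_pos hk
  rw [this]
  exact blkOf_eq p s k _ (le_of_lt hk) (by omega) (by omega)

lemma ehat_strictMono (hppos : ∀ k, k < s → 0 < p k) (n : ℕ) (hn : n = cumsum p (s+1)) :
    StrictMono (ehat p s n) := by
  intro k k' hkk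
  unfold ehat
  by_cases hk' : k' < s
  · have hk : k < s := lt_trans hkk hk'
    rw [if_pos hk, if_pos hk']
    have h1 := cumsum_pos hppos hk
    have h2 := cumsum_pos hppos hk'
    have h3 : cumsum p (k+1) ≤ cumsum p k' := cumsum_mono p (by omega)
    omega
  · rw [if_neg hk']
    by_cases hk : k < s
    · rw [if_pos hk]
      have h3 : cumsum p (k+1) ≤ cumsum p (s+1) := cumsum_mono p (by omega)
      omega
    · rw [if_neg hk]; omega

lemma ehat_lt_n (hppos : ∀ k, k < s → 0 < p k) {n k : ℕ} (hn : n = cumsum p (s+1))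
    (hk : k < s) : ehat p s n k < n := by
  have h1 := cumsum_pos hppos hk
  have h3 : cumsum p (k+1) ≤ cumsum p (s+1) := cumsum_mono p (by omega)
  rw [ehat, if_pos hk]
  omega

lemma muOf_eval {k i : ℕ} (hk : k ≤ s) (h1 : cumsum p k ≤ i) (h2 : i < cumsum p (k+1)) :
    muOf s d p i = if k < s then d k else 0 := by
  unfold muOf
  rw [blkOf_eq p s k i hk h1 h2]

lemma muMinus_eval (c : ℕ → ℕ) {k i : ℕ} (hk : k ≤ s) (h1 : cumsum p k ≤ i)
    (h2 : i < cumsum p (k+1)) :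
    muMinus s d p c i = if k < s then
      (if p k - c k ≤ i - cumsum p k then d k - 1 else d k) else 0 := by
  unfold muMinus
  rw [blkOf_eq p s k i hk h1 h2]

lemma muMinus_antitone (hd : ∀ k, k + 1 < s → d (k+1) < d k) (c : ℕ → ℕ) {n : ℕ}
    (hn : n = cumsum p (s+1)) :
    Antitone (fun i : Fin n => muMinus s d p c i.val) := by
  intro i i' hii
  simp only
  obtain ⟨hb1, hb2, hb3⟩ := blkOf_spec p s i.val (by rw [← hn]; exact i.isLt)
  obtain ⟨hb1', hb2', hb3'⟩ := blkOf_spec p s i'.val (by rw [← hn]; exact i'.isLt)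
  set b := blkOf p s i.val with hbdef
  set b' := blkOf p s i'.val with hbdef'
  have hii' : (i : ℕ) ≤ (i' : ℕ) := hii
  have hbb : b ≤ b' := by
    by_contra hcon
    push_neg at hcon
    have : cumsum p (b'+1) ≤ cumsum p b := cumsum_mono p (by omega)
    omega
  rcases Nat.eq_or_lt_of_le hbb with hbeq | hblt
  · -- same block
    unfold muMinus
    rw [← hbdef, ← hbdef', ← hbeq]
    split_ifs <;> omega
  · -- strictly later block
    have hbs : b < s := by omega
    unfold muMinus
    rw [← hbdef, ← hbdef']
    by_cases hb's : b' < s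
    · have hdd : d b' < d b := d_lt d s hd b b' hblt hb's
      rw [if_pos hbs, if_pos hb's]
      split_ifs <;> omega
    · rw [if_neg hb's]
      omega

lemma muMinus_mono_c (c c' : ℕ → ℕ) (hcc : ∀ k, c k ≤ c' k) (i : ℕ) :
    muMinus s d p c' i ≤ muMinus s d p c i := by
  unfold muMinus
  by_cases hb : blkOf p s i < s
  · rw [if_pos hb, if_pos hb]
    have := hcc (blkOf p s i)
    split_ifs <;> omega
  · rw [if_neg hb, if_neg hb]

lemma muMinus_eF_eq (hppos : ∀ k, k < s → 0 < p k) {n : ℕ} (hn : n = cumsum p (s+1))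
    (G : Finset ℕ) (hG : G ⊆ Finset.range s) {i : ℕ} (hi : i < n) :
    muMinus s d p (eF G) i = muOf s d p i - eF (G.image (ehat p s n)) i := by
  obtain ⟨hb1, hb2, hb3⟩ := blkOf_spec p s i (by omega)
  set b := blkOf p s i with hbdef
  have himage : i ∈ G.image (ehat p s n) ↔ (b ∈ G ∧ i = ehat p s n b) := by
    constructor
    · intro hmem
      obtain ⟨k, hk, hki⟩ := Finset.mem_image.1 hmem
      have hks : k < s := Finset.mem_range.1 (hG hk)
      have : blkOf p s i = k := by rw [← hki]; exact ehat_blk hppos hks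
      rw [← hbdef] at this
      subst this
      exact ⟨hk, hki.symm⟩
    · rintro ⟨h1, h2⟩
      exact Finset.mem_image.2 ⟨b, h1, h2.symm⟩
  unfold muMinus muOf
  rw [← hbdef]
  by_cases hbs : b < s
  · rw [if_pos hbs, if_pos hbs]
    have hehat : ehat p s n b = cumsum p (b+1) - 1 := if_pos hbs
    have hc := cumsum_pos hppos hbs
    have hcs := cumsum_succ p b
    by_cases hbG : b ∈ G
    · have heF : eF G b = 1 := if_pos hbG
      rw [heF]
      by_cases hie : i = ehat p s n b
      · have h1 : eF (G.image (ehat p s n)) i = 1 :=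
          if_pos (himage.2 ⟨hbG, hie⟩)
        rw [h1, if_pos (by rw [hie, hehat]; omega)]
      · have h1 : eF (G.image (ehat p s n)) i = 0 :=
          if_neg (fun hmem => hie (himage.1 hmem).2)
        rw [h1, if_neg (by rw [hehat] at hie; omega)]
        omega
    · have heF : eF G b = 0 := if_neg hbG
      have h1 : eF (G.image (ehat p s n)) i = 0 :=
        if_neg (fun hmem => hbG (himage.1 hmem).1)
      rw [heF, h1, if_neg (by omega)]
      omega
  · rw [if_neg hbs, if_neg hbs]
    omega
end MuLemmas


/-- Let `λ^1, …, λ^r ∈ P_n`, `I = ⟨λ^1, …, λ^r⟩_{S_n}` and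
`J = (x^{λ^1}, …, x^{λ^r})` its unsymmetrization.  Then for every partition
`μ = (d_1^{p_1}, …, d_s^{p_s}, 0^{p_{s+1}}) ∈ P_n` and every `i ≥ 0`,
`γ_i^{μ,0}(I) = dim_k Tor_i(J, k)_μ`. -/
theorem statement_2 (K : Type) [Field K] (n r : ℕ)
    (L : Fin r → Fin n → ℕ) (hL : ∀ j, Antitone (L j))
    (s : ℕ) (d p : ℕ → ℕ)
    (hn : n = cumsum p (s + 1))
    (hd : ∀ k, k + 1 < s → d (k + 1) < d k)
    (hdpos : ∀ k, k < s → 0 < d k)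
    (hppos : ∀ k, k < s → 0 < p k)
    (i : ℕ) :
    gammaDim K n (symIdeal K n r L) s d p (fun _ => 0) i =
      torDim K n (unsymIdeal K n r L) i (fun t => muOf s d p t.val) := by
  classical
  set I := symIdeal K n r L with hI
  set J := unsymIdeal K n r L with hJ
  set a : Fin n → ℕ := fun t : Fin n => muOf s d p t.val with ha_def
  set e := ehat p s n with he_def
  have hesm : StrictMono e := ehat_strictMono hppos n hn
  set Δ := DeltaCx K n I s d p (fun _ => 0) with hΔ
  set Kos := KosI K n J a with hKos
  show rhd0 K Δ i = rhd0 K Kos i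
  have hebounds : ∀ k, k < s → cumsum p k ≤ e k ∧ e k < cumsum p (k+1) ∧ e k < n := by
    intro k hk
    have h1 := cumsum_pos hppos hk
    have h2 : e k = cumsum p (k+1) - 1 := if_pos hk
    have h3 : cumsum p (k+1) ≤ cumsum p (s+1) := cumsum_mono p (by omega)
    exact ⟨by omega, by omega, by omega⟩
  have haval : ∀ i : Fin n, a i = muOf s d p i.val := fun i => rfl
  have hae : ∀ (i : Fin n) (k : ℕ), k < s → (i : ℕ) = e k → a i = d k := by
    intro i k hk hik
    obtain ⟨h1, h2, _⟩ := hebounds k hk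
    rw [haval i, hik, muOf_eval (le_of_lt hk) h1 h2, if_pos hk]
  -- membership bridges
  have hmuval : ∀ G : Finset ℕ, G ⊆ Finset.range s →
      (fun i : Fin n => muMinus s d p (fun j => 0 + eF G j) i.val)
        = fun i : Fin n => a i - eF (G.image e) i.val := by
    intro G hG
    funext t
    have h0 : (fun j => 0 + eF G j) = eF G := funext fun j => zero_add _
    rw [h0, haval t]
    exact muMinus_eF_eq hppos hn G hG t.isLt
  have hΔmem : ∀ G : Finset ℕ, G ∈ Δ ↔ G ⊆ Finset.range s ∧
      mon K n (fun i : Fin n => muMinus s d p (fun j => 0 + eF G j) i.val) ∈ I := by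
    intro G
    rw [hΔ]
    unfold DeltaCx
    rw [Set.mem_setOf_eq]
  have hKmem : ∀ F : Finset ℕ, F ∈ Kos ↔ F ⊆ Finset.range n ∧
      (∀ i : Fin n, (i : ℕ) ∈ F → 1 ≤ a i) ∧
      mon K n (fun i : Fin n => a i - eF F i.val) ∈ J := by
    intro F
    rw [hKos]
    unfold KosI
    rw [Set.mem_setOf_eq]
  have hbridge : ∀ G : Finset ℕ, G ⊆ Finset.range s →
      (mon K n (fun i : Fin n => muMinus s d p (fun j => 0 + eF G j) i.val) ∈ I
        ↔ mon K n (fun i : Fin n => a i - eF (G.image e) i.val) ∈ J) := by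
    intro G hG
    have hant2 : Antitone (fun i : Fin n => a i - eF (G.image e) i.val) := by
      rw [← hmuval G hG]
      exact muMinus_antitone hd _ hn
    rw [hmuval G hG, hI, hJ, mem_sym_iff_of_antitone K n r L hL _ hant2,
      mem_unsym_iff K n r L]
  -- Δ is down-closed
  have hΔdc : Dc Δ := by
    intro G hGΔ G' hsub
    rw [hΔmem] at hGΔ ⊢
    obtain ⟨hG1, hG2⟩ := hGΔ
    refine ⟨subset_trans hsub hG1, ?_⟩
    have hant : Antitone (fun i : Fin n => muMinus s d p (fun j => 0 + eF G' j) i.val) :=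
      muMinus_antitone hd _ hn
    rw [hI, mem_sym_iff_of_antitone K n r L hL _ hant]
    rw [hI, mem_sym_iff_of_antitone K n r L hL _ (muMinus_antitone hd _ hn)] at hG2
    obtain ⟨j, hj⟩ := hG2
    refine ⟨j, fun t => le_trans (hj t) (muMinus_mono_c _ _ (fun k => ?_) _)⟩
    unfold eF
    by_cases hk : k ∈ G'
    · rw [if_pos hk, if_pos (hsub hk)]
    · rw [if_neg hk]; omega
  have hΔbound : ∀ F ∈ Δ, F ⊆ Finset.range s := fun F hF => ((hΔmem F).1 hF).1
  -- Kos is down-closed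
  have hKdc : Dc Kos := by
    intro F hFK G hGF
    rw [hKmem] at hFK ⊢
    obtain ⟨hF1, hF2, hF3⟩ := hFK
    refine ⟨subset_trans hGF hF1, fun t ht => hF2 t (hGF ht), ?_⟩
    rw [hJ, mem_unsym_iff] at hF3 ⊢
    obtain ⟨j, hj⟩ := hF3
    refine ⟨j, fun t => le_trans (hj t) (Nat.sub_le_sub_left ?_ _)⟩
    unfold eF
    by_cases htG : (t : ℕ) ∈ G
    · rw [if_pos htG, if_pos (hGF htG)]
    · rw [if_neg htG]; omega
  have hKbound : ∀ F ∈ Kos, F ⊆ Finset.range n := fun F hF => ((hKmem F).1 hF).1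
  -- the non-end vertices and the folding data
  set W : ℕ → ℕ := fun x => e (blkOf p s x) with hW
  set NE : Finset ℕ := (Finset.range n).filter (fun x => blkOf p s x < s ∧ x ≠ W x) with hNE
  have hKcone : ∀ x ∈ NE, ∀ F ∈ Kos, x ∈ F → insert (W x) F ∈ Kos := by
    intro x hx F hFK hxF
    obtain ⟨hxn, hxk, hxe⟩ : x < n ∧ blkOf p s x < s ∧ x ≠ W x := by
      have := Finset.mem_filter.1 hx
      exact ⟨Finset.mem_range.1 this.1, this.2.1, this.2.2⟩
    obtain ⟨hs1, hs2, hs3⟩ := blkOf_spec p s x (by omega)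
    set k := blkOf p s x with hk_def
    obtain ⟨hw1, hw2, hw3⟩ := hebounds k hxk
    have hxw : x < W x := by
      have h2 : W x = cumsum p (k+1) - 1 := if_pos hxk
      have h1 := cumsum_pos hppos hxk
      omega
    rw [hKmem] at hFK ⊢
    obtain ⟨hF1, hF2, hF3⟩ := hFK
    by_cases hwF : W x ∈ F
    · rw [Finset.insert_eq_self.2 hwF]
      exact ⟨hF1, hF2, hF3⟩
    refine ⟨?_, ?_, ?_⟩
    · intro y hy
      rcases Finset.mem_insert.1 hy with rfl | hy
      · exact Finset.mem_range.2 hw3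
      · exact hF1 hy
    · intro t ht
      rcases Finset.mem_insert.1 ht with htw | ht
      · rw [hae t k hxk htw]
        exact hdpos k hxk
      · exact hF2 t ht
    · rw [hJ, mem_unsym_iff] at hF3 ⊢
      obtain ⟨j, hj⟩ := hF3
      refine ⟨j, fun t => ?_⟩
      by_cases htw : (t : ℕ) = W x
      · have heF1 : eF (insert (W x) F) (t : ℕ) = 1 :=
          if_pos (htw ▸ Finset.mem_insert_self _ _)
        rw [heF1, hae t k hxk htw]
        have hxfin : (⟨x, hxn⟩ : Fin n) ≤ t := by
          rw [Fin.le_def]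
          simp only [htw]
          omega
        have hax : a ⟨x, hxn⟩ = d k := by
          rw [haval, muOf_eval hs1 hs2 hs3, if_pos hxk]
        have heFx : eF F x = 1 := if_pos hxF
        have hjx := hj ⟨x, hxn⟩
        rw [hax] at hjx
        have : eF F ((⟨x, hxn⟩ : Fin n) : ℕ) = 1 := heFx
        rw [this] at hjx
        exact le_trans (hL j hxfin) hjx
      · have heF2 : eF (insert (W x) F) (t : ℕ) = eF F (t : ℕ) := by
          unfold eF
          by_cases htF : (t : ℕ) ∈ F
          · rw [if_pos (Finset.mem_insert_of_mem htF), if_pos htF]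
          · rw [if_neg (fun hmem => by
              rcases Finset.mem_insert.1 hmem with h | h
              · exact htw h
              · exact htF h), if_neg htF]
        rw [heF2]
        exact hj t
  have hNEprop : ∀ x ∈ NE, x < W x ∧ W x ∉ NE ∧
      (∀ F ∈ Kos, x ∈ F → insert (W x) F ∈ Kos) := by
    intro x hx
    obtain ⟨hxn, hxk, hxe⟩ : x < n ∧ blkOf p s x < s ∧ x ≠ W x := by
      have := Finset.mem_filter.1 hx
      exact ⟨Finset.mem_range.1 this.1, this.2.1, this.2.2⟩
    obtain ⟨hs1, hs2, hs3⟩ := blkOf_spec p s x (by omega)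
    refine ⟨?_, ?_, fun F hF hxF => hKcone x hx F hF hxF⟩
    · have h2 : W x = cumsum p (blkOf p s x + 1) - 1 := if_pos hxk
      have h1 := cumsum_pos hppos hxk
      omega
    · intro hmem
      have h := Finset.mem_filter.1 hmem
      apply h.2.2
      show W x = e (blkOf p s (W x))
      rw [show blkOf p s (W x) = blkOf p s x from ehat_blk hppos hxk]
  -- the folded complex is the image of Δ
  have hseteq : {F | F ∈ Kos ∧ ∀ x ∈ NE, x ∉ F} = Finset.image e '' Δ := by
    ext F
    simp only [Set.mem_setOf_eq, Set.mem_image]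
    constructor
    · rintro ⟨hFK, hFNE⟩
      have hFK' := (hKmem F).1 hFK
      obtain ⟨hF1, hF2, hF3⟩ := hFK'
      set G : Finset ℕ := (Finset.range s).filter (fun k => e k ∈ F) with hG_def
      have hGs : G ⊆ Finset.range s := Finset.filter_subset _ _
      have himg : G.image e = F := by
        ext y
        simp only [Finset.mem_image, hG_def, Finset.mem_filter, Finset.mem_range]
        constructor
        · rintro ⟨k, ⟨hks, hkF⟩, rfl⟩
          exact hkF
        · intro hyF
          have hyn : y < n := Finset.mem_range.1 (hF1 hyF)
          obtain ⟨ht1, ht2, ht3⟩ := blkOf_spec p s y (by omega)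
          set k := blkOf p s y with hk_def
          have hks : k < s := by
            by_contra hcon
            have := hF2 ⟨y, hyn⟩ hyF
            rw [haval, muOf_eval ht1 ht2 ht3, if_neg (by omega)] at this
            omega
          have hye : y = e k := by
            by_contra hcon
            exact hFNE y (Finset.mem_filter.2
              ⟨Finset.mem_range.2 hyn, hks, by rw [hW]; exact hcon⟩) hyF
          exact ⟨k, ⟨hks, hye ▸ hyF⟩, hye.symm⟩
      refine ⟨G, ?_, himg⟩
      rw [hΔmem]
      refine ⟨hGs, ?_⟩
      rw [hbridge G hGs, himg]
      exact hF3
    · rintro ⟨G, hGΔ, rfl⟩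
      have hGΔ' := (hΔmem G).1 hGΔ
      obtain ⟨hGs, hGmon⟩ := hGΔ'
      constructor
      · rw [hKmem]
        refine ⟨?_, ?_, ?_⟩
        · intro y hy
          obtain ⟨k, hk, rfl⟩ := Finset.mem_image.1 hy
          exact Finset.mem_range.2 (hebounds k (Finset.mem_range.1 (hGs hk))).2.2
        · intro t ht
          obtain ⟨k, hk, hke⟩ := Finset.mem_image.1 ht
          have hks : k < s := Finset.mem_range.1 (hGs hk)
          rw [hae t k hks hke.symm]
          exact hdpos k hks
        · rw [← hbridge G hGs]
          exact hGmon
      · intro x hx hmem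
        obtain ⟨k, hk, rfl⟩ := Finset.mem_image.1 hmem
        have hks : k < s := Finset.mem_range.1 (hGs hk)
        have h := Finset.mem_filter.1 hx
        apply h.2.2
        show e k = e (blkOf p s (e k))
        rw [ehat_blk hppos hks]
  -- assemble everything
  calc rhd0 K Δ i
      = rhd K (lab (Finset.image e '' Δ)) i :=
        relabel_rhd K Δ hΔdc e hesm s hΔbound i
    _ = rhd K (lab {F | F ∈ Kos ∧ ∀ x ∈ NE, x ∉ F}) i :=
        (rhd_congr K _ _ hseteq i).symm
    _ = rhd0 K Kos i :=
        fold_induction K Kos hKdc n hKbound W NE hNEprop i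
end
end

section
/- Let I ⊆ R be a nonzero, proper S_n-invariant monomial ideal. Then there exist unique elements μ^1,…,μ^t ∈ P_n^∞ (t ≥ 1, unique as a set) such that I = Q_{μ^1} ∩ ⋯ ∩ Q_{μ^t} and this presentation is irredundant, i.e. none of the ideals Q_{μ^k} can be omitted from the intersection. -/
open scoped BigOperators

noncomputable section
open Classical

/-!
The ideals `Q_ν` are governed by one combinatorial fact: a monomial `x^a` lies outside `Q_ν`
iff some rearrangement of `a` fits under `ν`, and for weakly decreasing `a` this already happens
for `a` itself. Call `ν` *avoiding* for `I` if it is weakly decreasing and every `x^a` with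
`a ≤ ν` lies outside `I`; for a symmetric monomial ideal this says exactly `I ⊆ Q_ν`.
The maximal avoiding `ν` form an antichain in the well-quasi-order `(ℕ ∪ {∞})^n`, hence a finite
set, and `I` is the intersection of their `Q_ν`: if `x^a ∉ I`, the sorted rearrangement of `a`
is avoiding and lies under a maximal one (Zorn), and then `x^a ∉ Q_ν`.

Conversely, in any presentation `I = ⋂_{ρ ∈ Λ} Q_ρ` by weakly decreasing `ρ`, every `ρ` is
avoiding and every avoiding `ν` lies under some `ρ ∈ Λ`: truncate `ν` at a height `N` above all
finite entries of the `ρ`; the truncation is outside `I`, hence fits under some `ρ`, and then so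
does `ν`. Irredundancy makes `Λ` an antichain, since `ρ ≤ ρ'` gives `Q_{ρ'} ⊆ Q_ρ`; so `Λ` is
precisely the set of maximal avoiding `ν`, which gives both irredundancy of the canonical
presentation and uniqueness.
-/

open MvPolynomial

section MonomialDetermined

variable {σ R : Type*} [CommSemiring R]

/-- Equivalently: `J` is spanned by monomials. -/
def IsMonomialDetermined (J : Ideal (MvPolynomial σ R)) : Prop :=
  ∀ p, p ∈ J ↔ ∀ d ∈ p.support, monomial d (1 : R) ∈ J

lemma isMonomialDetermined_span [Nontrivial R] (S : Set (σ →₀ ℕ)) :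
    IsMonomialDetermined (Ideal.span ((fun s => monomial s (1 : R)) '' S)) := by
  intro p
  simp [mem_ideal_span_monomial_image, support_monomial]

lemma IsMonomialDetermined.iInf {ι : Sort*} {J : ι → Ideal (MvPolynomial σ R)}
    (hJ : ∀ i, IsMonomialDetermined (J i)) : IsMonomialDetermined (⨅ i, J i) := by
  intro p
  simp only [Submodule.mem_iInf, hJ _ p]
  exact ⟨fun h d hd i => h i d hd, fun h i d hd => h d hd i⟩

lemma IsMonomialDetermined.le_of_forall {J J' : Ideal (MvPolynomial σ R)}
    (hJ : IsMonomialDetermined J) (hJ' : IsMonomialDetermined J')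
    (h : ∀ d, monomial d (1 : R) ∈ J → monomial d 1 ∈ J') : J ≤ J' :=
  fun p hp => (hJ' p).2 fun d hd => h d ((hJ p).1 hp d hd)

lemma IsMonomialDetermined.ext {J J' : Ideal (MvPolynomial σ R)}
    (hJ : IsMonomialDetermined J) (hJ' : IsMonomialDetermined J')
    (h : ∀ d, monomial d (1 : R) ∈ J ↔ monomial d 1 ∈ J') : J = J' :=
  le_antisymm (hJ.le_of_forall hJ' fun d => (h d).1) (hJ'.le_of_forall hJ fun d => (h d).2)

end MonomialDetermined

section Rearrangement

lemma Equiv.Perm.exists_ge_apply_le {n : ℕ} (σ : Equiv.Perm (Fin n)) (i : Fin n) :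
    ∃ j, i ≤ j ∧ σ j ≤ i := by
  by_contra! h
  have hmaps : (Finset.Ici i).image σ ⊆ Finset.Ioi i := by
    simpa [Finset.subset_iff] using h
  have hcard := Finset.card_le_card hmaps
  rw [Finset.card_image_of_injective _ σ.injective, Fin.card_Ici, Fin.card_Ioi] at hcard
  omega

lemma Antitone.le_of_comp_perm_le {n : ℕ} {α : Type*} [Preorder α] {a b : Fin n → α}
    (ha : Antitone a) (hb : Antitone b) (σ : Equiv.Perm (Fin n)) (h : a ∘ σ ≤ b) : a ≤ b := by
  intro i
  obtain ⟨j, hij, hσj⟩ := σ.exists_ge_apply_le i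
  calc a i ≤ a (σ j) := ha hσj
    _ ≤ b j := h j
    _ ≤ b i := hb hij

lemma exists_perm_antitone_comp {n : ℕ} {α : Type*} [LinearOrder α] (a : Fin n → α) :
    ∃ σ : Equiv.Perm (Fin n), Antitone (a ∘ σ) :=
  ⟨Fin.revPerm.trans (Tuple.sort a),
    (Tuple.monotone_sort a).comp_antitone fun _ _ => Fin.rev_le_rev.mpr⟩

end Rearrangement

lemma Set.finite_setOf_maximal {α : Type*} [PartialOrder α] [WellQuasiOrderedLE α]
    (P : α → Prop) : {x | Maximal P x}.Finite :=
  (setOfPred_maximal_antichain P).finite_of_partiallyWellOrderedOn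
    (Set.isPWO_of_wellQuasiOrderedLE _)

lemma ENat.lt_natCast_iff_toNat_add_one_le {x : ℕ∞} {m : ℕ} :
    x < m ↔ x ≠ ⊤ ∧ x.toNat + 1 ≤ m := by
  induction x using ENat.recTopCoe with
  | top => simp
  | coe k => simp

lemma ENat.exists_natCast_le_of_le_iSup {ι : Sort*} [Nonempty ι] {f : ι → ℕ∞} {m : ℕ}
    (h : (m : ℕ∞) ≤ ⨆ i, f i) : ∃ i, (m : ℕ∞) ≤ f i := by
  cases m with
  | zero => exact ⟨Classical.arbitrary ι, by simp⟩
  | succ k =>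
    obtain ⟨i, hi⟩ := lt_iSup_iff.1 ((Nat.cast_lt.2 k.lt_succ_self).trans_le h)
    exact ⟨i, by simpa using Order.add_one_le_of_lt hi⟩

lemma IsChain.exists_natCast_le_of_le_sSup {ι : Type*} [Finite ι] {c : Set (ι → ℕ∞)}
    (hc : IsChain (· ≤ ·) c) (hne : c.Nonempty) {a : ι → ℕ}
    (ha : ∀ i, (a i : ℕ∞) ≤ sSup c i) : ∃ ν ∈ c, ∀ i, (a i : ℕ∞) ≤ ν i := by
  have : Nonempty c := hne.to_subtype
  have hcoord : ∀ i, ∃ ν : c, (a i : ℕ∞) ≤ ν.1 i := fun i =>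
    ENat.exists_natCast_le_of_le_iSup (by simpa only [sSup_apply] using ha i)
  choose f hf using hcoord
  have := Fintype.ofFinite ι
  obtain ⟨ν, hν⟩ := hc.directedOn.directed_val.finset_le (Finset.univ.image f)
  exact ⟨ν, ν.2, fun i => (hf i).trans (hν (f i) (Finset.mem_image_of_mem f (Finset.mem_univ i)) i)⟩

lemma exists_natCast_gt_of_finite {ι : Type*} [Finite ι] {S : Set (ι → ℕ∞)} (hS : S.Finite) :
    ∃ N : ℕ, ∀ ρ ∈ S, ∀ i, ρ i ≠ ⊤ → ρ i < N := by
  obtain ⟨M, hM⟩ := ((hS.prod Set.finite_univ).image fun p => (p.1 p.2).toNat).bddAbove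
  refine ⟨M + 1, fun ρ hρ i hi => ?_⟩
  rw [← ENat.natCast_toNat hi, Nat.cast_lt]
  exact Nat.lt_succ_of_le (hM ⟨(ρ, i), ⟨hρ, trivial⟩, rfl⟩)

section Monomials

variable {K : Type} [Field K] {n : ℕ}

@[simp]
lemma mon_coe (d : Fin n →₀ ℕ) : mon K n ⇑d = monomial d 1 := by
  simp [mon]

lemma IsMonomialIdeal.isMonomialDetermined {I : Ideal (MvPolynomial (Fin n) K)}
    (hI : IsMonomialIdeal K n I) : IsMonomialDetermined I := by
  obtain ⟨S, rfl⟩ := hI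
  have : mon K n '' S =
      (fun s => monomial s (1 : K)) '' (Finsupp.equivFunOnFinite.symm '' S) := by
    rw [Set.image_image]; rfl
  rw [this]
  exact isMonomialDetermined_span _

lemma mon_mem_of_le (I : Ideal (MvPolynomial (Fin n) K)) {a b : Fin n → ℕ} (hab : a ≤ b)
    (ha : mon K n a ∈ I) : mon K n b ∈ I :=
  I.mem_of_dvd (monomial_dvd_monomial.2 ⟨Or.inr fun i => by simpa using hab i, one_dvd _⟩) ha

lemma rename_mon (σ : Equiv.Perm (Fin n)) (a : Fin n → ℕ) :
    rename σ (mon K n a) = mon K n (a ∘ σ.symm) := by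
  have : Finsupp.equivMapDomain σ (Finsupp.equivFunOnFinite.symm a) =
      Finsupp.equivFunOnFinite.symm (a ∘ σ.symm) := by
    ext i; simp
  rw [mon, mon, rename_monomial, ← Finsupp.equivMapDomain_eq_mapDomain, this]

lemma IsSymmetricIdeal.mon_comp_mem {I : Ideal (MvPolynomial (Fin n) K)}
    (hI : IsSymmetricIdeal K n I) (σ : Equiv.Perm (Fin n)) {a : Fin n → ℕ}
    (ha : mon K n a ∈ I) : mon K n (a ∘ σ) ∈ I := by
  have := Ideal.mem_map_of_mem (rename (σ⁻¹ : Equiv.Perm (Fin n))).toRingHom ha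
  rwa [hI, AlgHom.toRingHom_eq_coe, RingHom.coe_coe, rename_mon] at this

end Monomials

section Qgen

variable {K : Type} [Field K] {n : ℕ}

lemma Qgen_eq_iInf_span (ν : Fin n → ℕ∞) :
    Qgen K n ν = ⨅ σ : Equiv.Perm (Fin n), Ideal.span ((fun s => monomial s (1 : K)) ''
      {d | ∃ i, ν i ≠ ⊤ ∧ d = Finsupp.single (σ i) ((ν i).toNat + 1)}) := by
  refine iInf_congr fun σ => ?_
  rw [Ideal.map_span]
  congr 1
  ext g
  constructor <;> rintro ⟨_, ⟨i, hi, rfl⟩, rfl⟩ <;> refine ⟨_, ⟨i, hi, rfl⟩, ?_⟩ <;>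
    simp only [AlgHom.toRingHom_eq_coe, RingHom.coe_coe, X_pow_eq_monomial, rename_monomial,
      Finsupp.mapDomain_single]

lemma isMonomialDetermined_Qgen (ν : Fin n → ℕ∞) : IsMonomialDetermined (Qgen K n ν) := by
  rw [Qgen_eq_iInf_span]
  exact IsMonomialDetermined.iInf fun _ => isMonomialDetermined_span _

lemma mon_mem_Qgen_iff (ν : Fin n → ℕ∞) (a : Fin n → ℕ) :
    mon K n a ∈ Qgen K n ν ↔ ∀ σ : Equiv.Perm (Fin n), ∃ i, ν i < a (σ i) := by
  rw [Qgen_eq_iInf_span, Submodule.mem_iInf]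
  refine forall_congr' fun σ => ?_
  rw [mon, mem_ideal_span_monomial_image]
  simp [support_monomial, -Finsupp.single_add, Finsupp.single_le_iff,
    ENat.lt_natCast_iff_toNat_add_one_le]

lemma mon_notMem_Qgen_iff (ν : Fin n → ℕ∞) (a : Fin n → ℕ) :
    mon K n a ∉ Qgen K n ν ↔ ∃ σ : Equiv.Perm (Fin n), ∀ i, (a (σ i) : ℕ∞) ≤ ν i := by
  simp [mon_mem_Qgen_iff]

lemma mon_notMem_Qgen_iff_of_antitone {ν : Fin n → ℕ∞} {a : Fin n → ℕ} (hν : Antitone ν)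
    (ha : Antitone a) : mon K n a ∉ Qgen K n ν ↔ ∀ i, (a i : ℕ∞) ≤ ν i := by
  rw [mon_notMem_Qgen_iff]
  exact ⟨fun ⟨σ, hσ⟩ => (Nat.mono_cast.comp_antitone ha).le_of_comp_perm_le hν σ hσ,
    fun h => ⟨1, h⟩⟩

lemma Qgen_antitone : Antitone (Qgen K n) := fun ν ρ hνρ =>
  (isMonomialDetermined_Qgen ρ).le_of_forall (isMonomialDetermined_Qgen ν) fun d hd => by
    rw [← mon_coe, mon_mem_Qgen_iff] at hd ⊢
    exact fun σ => (hd σ).imp fun i hi => (hνρ i).trans_lt hi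

end Qgen

section Avoiding

variable {K : Type} [Field K] {n : ℕ} (I : Ideal (MvPolynomial (Fin n) K))

def AvoidsIdeal (ν : Fin n → ℕ∞) : Prop :=
  Antitone ν ∧ ∀ a : Fin n → ℕ, (∀ i, (a i : ℕ∞) ≤ ν i) → mon K n a ∉ I

variable {I}

lemma avoidsIdeal_of_le_Qgen {ρ : Fin n → ℕ∞} (hρ : Antitone ρ) (hI : I ≤ Qgen K n ρ) :
    AvoidsIdeal I ρ :=
  ⟨hρ, fun a ha haI => (mon_notMem_Qgen_iff ρ a).2 ⟨1, ha⟩ (hI haI)⟩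

lemma AvoidsIdeal.le_Qgen {ν : Fin n → ℕ∞} (hν : AvoidsIdeal I ν) (hmon : IsMonomialIdeal K n I)
    (hsym : IsSymmetricIdeal K n I) : I ≤ Qgen K n ν := by
  refine hmon.isMonomialDetermined.le_of_forall (isMonomialDetermined_Qgen ν) fun d hd => ?_
  rw [← mon_coe] at hd ⊢
  by_contra hnot
  obtain ⟨σ, hσ⟩ := (mon_notMem_Qgen_iff ν d).1 hnot
  exact hν.2 _ hσ (hsym.mon_comp_mem σ hd)

lemma avoidsIdeal_sSup {c : Set (Fin n → ℕ∞)} (hc : IsChain (· ≤ ·) c) (hne : c.Nonempty)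
    (h : ∀ ν ∈ c, AvoidsIdeal I ν) : AvoidsIdeal I (sSup c) := by
  refine ⟨fun i j hij => ?_, fun a ha => ?_⟩
  · simp only [sSup_apply]
    exact iSup_mono fun ν => (h ν.1 ν.2).1 hij
  · obtain ⟨ν, hνc, haν⟩ := hc.exists_natCast_le_of_le_sSup hne ha
    exact (h ν hνc).2 a haν

lemma AvoidsIdeal.exists_maximal_ge {ν : Fin n → ℕ∞} (hν : AvoidsIdeal I ν) :
    ∃ μ, ν ≤ μ ∧ Maximal (AvoidsIdeal I) μ :=
  zorn_le_nonempty₀ {μ | AvoidsIdeal I μ}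
    (fun c hcs hc _ hy => ⟨sSup c, avoidsIdeal_sSup hc ⟨_, hy⟩ hcs, fun _ hz => le_sSup hz⟩) ν hν

lemma AvoidsIdeal.exists_le_of_iInf_le {ν : Fin n → ℕ∞} (hν : AvoidsIdeal I ν)
    {S : Set (Fin n → ℕ∞)} (hS : S.Finite) (hanti : ∀ ρ ∈ S, Antitone ρ)
    (hI : ⨅ ρ ∈ S, Qgen K n ρ ≤ I) : ∃ ρ ∈ S, ν ≤ ρ := by
  obtain ⟨N, hN⟩ := exists_natCast_gt_of_finite hS
  set b : Fin n → ℕ := fun i => (min (ν i) N).toNat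
  have hb : ∀ i, (b i : ℕ∞) = min (ν i) N := fun i =>
    ENat.natCast_toNat (ne_top_of_le_ne_top (ENat.natCast_ne_top N) (min_le_right _ _))
  have hb_anti : Antitone b := fun i j hij => by
    have : (b j : ℕ∞) ≤ b i := by rw [hb, hb]; exact min_le_min_right _ (hν.1 hij)
    exact_mod_cast this
  have hbI : mon K n b ∉ I := hν.2 b fun i => (hb i).trans_le (min_le_left _ _)
  obtain ⟨ρ, hρS, hbρ⟩ : ∃ ρ ∈ S, mon K n b ∉ Qgen K n ρ := by
    by_contra! h
    exact hbI (hI (by simpa only [Submodule.mem_iInf] using h))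
  refine ⟨ρ, hρS, fun i => ?_⟩
  have hbρ' := (mon_notMem_Qgen_iff_of_antitone (hanti ρ hρS) hb_anti).1 hbρ
  have hbi := (hb i).symm.trans_le (hbρ' i)
  by_cases htop : ρ i = ⊤
  · simp [htop]
  · have hlt : min (ν i) N < N := hbi.trans_lt (hN ρ hρS i htop)
    rwa [min_eq_left (min_lt_iff.1 hlt |>.resolve_right (lt_irrefl _)).le] at hbi

variable (I) in
def dualGenerators : Finset (Fin n → ℕ∞) :=
  (Set.finite_setOf_maximal (AvoidsIdeal I)).toFinset

lemma mem_dualGenerators {ν : Fin n → ℕ∞} : ν ∈ dualGenerators I ↔ Maximal (AvoidsIdeal I) ν :=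
  Set.Finite.mem_toFinset _

end Avoiding

section DualPresentation

variable {K : Type} [Field K] {n : ℕ} {I : Ideal (MvPolynomial (Fin n) K)}
  {Λ : Finset (Fin n → ℕ∞)}

lemma IsDualPresentation.eq_of_le (h : IsDualPresentation K n I Λ) {ρ ρ' : Fin n → ℕ∞}
    (hρ : ρ ∈ Λ) (hρ' : ρ' ∈ Λ) (hle : ρ ≤ ρ') : ρ = ρ' := by
  by_contra hne
  refine h.2.2 ρ hρ (le_antisymm ?_ ?_)
  · rw [h.2.1]
    exact le_iInf₂ fun τ hτ => le_iInf fun _ => iInf₂_le τ hτ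
  · rw [h.2.1]
    refine le_iInf₂ fun τ hτ => ?_
    rcases eq_or_ne τ ρ with rfl | hτ'
    · exact (iInf₂_le ρ' hρ').trans ((iInf_le _ (Ne.symm hne)).trans (Qgen_antitone hle))
    · exact (iInf₂_le τ hτ).trans (iInf_le _ hτ')

lemma IsDualPresentation.mem_iff_maximal (h : IsDualPresentation K n I Λ)
    (ν : Fin n → ℕ∞) : ν ∈ Λ ↔ Maximal (AvoidsIdeal I) ν := by
  have havoid : ∀ ρ ∈ Λ, AvoidsIdeal I ρ := fun ρ hρ =>
    avoidsIdeal_of_le_Qgen (h.1 ρ hρ) (h.2.1 ▸ iInf₂_le ρ hρ)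
  have hdom : ∀ ν, AvoidsIdeal I ν → ∃ ρ ∈ Λ, ν ≤ ρ := fun ν hν =>
    hν.exists_le_of_iInf_le Λ.finite_toSet h.1 h.2.1.ge
  refine ⟨fun hν => ⟨havoid ν hν, fun μ hμ hνμ => ?_⟩, fun hν => ?_⟩
  · obtain ⟨ρ, hρ, hμρ⟩ := hdom μ hμ
    exact (h.eq_of_le hν hρ (hνμ.trans hμρ)) ▸ hμρ
  · obtain ⟨ρ, hρ, hνρ⟩ := hdom ν hν.prop
    rwa [← hν.eq_of_ge (havoid ρ hρ) hνρ]

lemma mon_mem_iff_forall_maximal (hmon : IsMonomialIdeal K n I) (hsym : IsSymmetricIdeal K n I)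
    (a : Fin n → ℕ) :
    mon K n a ∈ I ↔ ∀ ν, Maximal (AvoidsIdeal I) ν → mon K n a ∈ Qgen K n ν := by
  refine ⟨fun ha ν hν => hν.prop.le_Qgen hmon hsym ha, fun h => ?_⟩
  by_contra ha
  obtain ⟨σ, hσ⟩ := exists_perm_antitone_comp a
  have haσ : mon K n (a ∘ σ) ∉ I := fun haσ => ha <| by
    simpa [Function.comp_assoc] using hsym.mon_comp_mem σ⁻¹ haσ
  have hsorted : AvoidsIdeal I fun i => (a (σ i) : ℕ∞) :=
    ⟨Nat.mono_cast.comp_antitone hσ, fun b hb hbI =>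
      haσ (mon_mem_of_le I (fun i => Nat.cast_le.1 (hb i)) hbI)⟩
  obtain ⟨ν, hle, hν⟩ := hsorted.exists_maximal_ge
  exact (mon_notMem_Qgen_iff ν a).2 ⟨σ, hle⟩ (h ν hν)

lemma isDualPresentation_dualGenerators (hmon : IsMonomialIdeal K n I)
    (hsym : IsSymmetricIdeal K n I) : IsDualPresentation K n I (dualGenerators I) := by
  have hanti : ∀ ν ∈ dualGenerators I, Antitone ν := fun ν hν =>
    (mem_dualGenerators.1 hν).prop.1
  refine ⟨hanti, ?_, fun ν hν heq => ?_⟩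
  · refine hmon.isMonomialDetermined.ext
      (.iInf fun ν => .iInf fun _ => isMonomialDetermined_Qgen ν) fun d => ?_
    simpa [Submodule.mem_iInf, mem_dualGenerators] using
      mon_mem_iff_forall_maximal hmon hsym ⇑d
  · have hν := mem_dualGenerators.1 hν
    obtain ⟨ρ, ⟨hρ, hρν⟩, hνρ⟩ := hν.prop.exists_le_of_iInf_le
      (S := {ρ | ρ ∈ dualGenerators I ∧ ρ ≠ ν}) ((dualGenerators I).finite_toSet.subset
        fun _ h => h.1) (fun ρ h => hanti ρ h.1)
      (by simp only [Set.mem_ofPred_eq, iInf_and]; exact heq.ge)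
    exact hρν (hν.eq_of_ge (mem_dualGenerators.1 hρ).prop hνρ)

end DualPresentation

theorem statement_5_general (K : Type) [Field K] (n : ℕ) (I : Ideal (MvPolynomial (Fin n) K))
    (hmon : IsMonomialIdeal K n I) (hsym : IsSymmetricIdeal K n I)
    (hproper : I ≠ ⊤) :
    ∃ Λ : Finset (Fin n → ℕ∞),
      (Λ.Nonempty ∧ IsDualPresentation K n I Λ) ∧
        ∀ Λ' : Finset (Fin n → ℕ∞), Λ'.Nonempty → IsDualPresentation K n I Λ' → Λ' = Λ := by
  have hΛ := isDualPresentation_dualGenerators hmon hsym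
  refine ⟨_, ⟨Finset.nonempty_iff_ne_empty.2 fun hempty => hproper ?_, hΛ⟩, fun Λ' _ hΛ' => ?_⟩
  · rw [hΛ.2.1, hempty]
    simp
  · ext ν
    rw [hΛ'.mem_iff_maximal, hΛ.mem_iff_maximal]

/-- Every nonzero, proper `S_n`-invariant monomial ideal `I ⊆ R` has a
presentation `I = Q_{μ^1} ∩ ⋯ ∩ Q_{μ^t}` with `μ^1, …, μ^t ∈ P_n^∞`, `t ≥ 1`, which is
irredundant (no `Q_{μ^k}` can be omitted), and the set `{μ^1, …, μ^t}` is unique. -/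
theorem statement_5 (K : Type) [Field K] (n : ℕ) (I : Ideal (MvPolynomial (Fin n) K))
    (hmon : IsMonomialIdeal K n I) (hsym : IsSymmetricIdeal K n I)
    (hne : I ≠ ⊥) (hproper : I ≠ ⊤) :
    ∃ Λ : Finset (Fin n → ℕ∞),
      (Λ.Nonempty ∧ IsDualPresentation K n I Λ) ∧
        ∀ Λ' : Finset (Fin n → ℕ∞), Λ'.Nonempty → IsDualPresentation K n I Λ' → Λ' = Λ :=
  statement_5_general K n I hmon hsym hproper
end
end

section
/- Let I ⊆ R be a nonzero, proper S_n-invariant monomial ideal and let μ, ρ ∈ Λ*(I) be dual generators of I. If μ ≼ ρ and μ ≠ ρ, then ℓ(μ) > ℓ(ρ). -/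
open scoped BigOperators

noncomputable section
open Classical

/-! A dual generator `ρ` whose ideal `Q_ρ` lies inside `Q_μ` for another dual generator `μ`
would make `μ` redundant. Under `ℓ(μ) ≤ ℓ(ρ)` the `∞`-entries of `μ`, an initial segment, are
among those of `ρ`, so `μ̃ ≤ ρ̃` forces `μ ≤ ρ` entrywise, whence `Q_ρ ⊆ Q_μ`. -/

theorem Finset.subset_of_isLowerSet_of_card_le {α : Type*} [LinearOrder α] {s t : Finset α}
    (hs : IsLowerSet (s : Set α)) (ht : IsLowerSet (t : Set α)) (hcard : s.card ≤ t.card) :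
    s ⊆ t := by
  rcases hs.total ht with hst | hts
  · exact_mod_cast hst
  · exact (Finset.eq_of_subset_of_card_le (Finset.coe_subset.mp hts) hcard).ge

theorem Antitone.isLowerSet_setOf_eq_top {α β : Type*} [Preorder α] [PartialOrder β] [OrderTop β]
    {f : α → β} (hf : Antitone f) : IsLowerSet {a | f a = ⊤} :=
  fun _ _ hba ha => top_le_iff.mp (ha ▸ hf hba)

theorem biInf_ne_eq_biInf_of_le {ι α : Type*} [CompleteLattice α] {s : Finset ι} {f : ι → α}
    {i j : ι} (hj : j ∈ s) (hji : j ≠ i) (hle : f j ≤ f i) :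
    ⨅ k ∈ s, ⨅ _ : k ≠ i, f k = ⨅ k ∈ s, f k := by
  refine le_antisymm (le_iInf₂ fun k hk => ?_) (iInf₂_mono fun _ _ => le_iInf fun _ => le_rfl)
  rcases eq_or_ne k i with rfl | hki
  · exact (iInf₂_le j hj).trans ((iInf_le _ hji).trans hle)
  · exact (iInf₂_le k hk).trans (iInf_le _ hki)

section DualGenerators

variable {n : ℕ} {μ ρ : Fin n → ℕ∞}

theorem eq_top_of_ellInf_le (hμ : Antitone μ) (hρ : Antitone ρ) (hℓ : ellInf n μ ≤ ellInf n ρ)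
    (i : Fin n) (hi : μ i = ⊤) : ρ i = ⊤ := by
  have hsub := Finset.subset_of_isLowerSet_of_card_le
    (by simpa using hμ.isLowerSet_setOf_eq_top) (by simpa using hρ.isLowerSet_setOf_eq_top) hℓ
  simpa using hsub (Finset.mem_filter.mpr ⟨Finset.mem_univ i, hi⟩)

theorem le_of_tildeOf_le {i : Fin n} (htop : μ i = ⊤ → ρ i = ⊤)
    (hle : tildeOf n μ i ≤ tildeOf n ρ i) : μ i ≤ ρ i := by
  by_cases hρi : ρ i = ⊤
  · exact hρi ▸ le_top
  have hμi : μ i ≠ ⊤ := mt htop hρi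
  simp only [tildeOf, if_neg hμi, if_neg hρi, add_le_add_iff_right] at hle
  rw [← ENat.natCast_toNat hμi, ← ENat.natCast_toNat hρi]
  exact_mod_cast hle

variable (K : Type) [Field K]

theorem Qgen_anti (hle : μ ≤ ρ) : Qgen K n ρ ≤ Qgen K n μ := by
  refine iInf_mono fun σ => Ideal.map_mono <| Ideal.span_le.mpr ?_
  rintro _ ⟨i, hρi, rfl⟩
  have hμi : μ i ≠ ⊤ := ne_top_of_le_ne_top hρi (hle i)
  have hexp : (μ i).toNat + 1 ≤ (ρ i).toNat + 1 :=
    Nat.add_le_add_right (ENat.toNat_le_toNat (hle i) hρi) 1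
  exact Ideal.mem_of_dvd _ (pow_dvd_pow _ hexp) (Ideal.subset_span ⟨i, hμi, rfl⟩)

theorem IsDualPresentation.not_Qgen_le {I : Ideal (MvPolynomial (Fin n) K)}
    {Λ : Finset (Fin n → ℕ∞)} (hpres : IsDualPresentation K n I Λ) (hμ : μ ∈ Λ) (hρ : ρ ∈ Λ)
    (hne : ρ ≠ μ) : ¬ Qgen K n ρ ≤ Qgen K n μ := fun hle =>
  hpres.2.2 μ hμ (hpres.2.1.trans (biInf_ne_eq_biInf_of_le hρ hne hle).symm)

end DualGenerators

theorem statement_6_general (K : Type) [Field K] (n : ℕ) (I : Ideal (MvPolynomial (Fin n) K))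
    (Λ : Finset (Fin n → ℕ∞)) (hpres : IsDualPresentation K n I Λ)
    (μ ρ : Fin n → ℕ∞) (hμ : μ ∈ Λ) (hρ : ρ ∈ Λ)
    (hle : preceq n μ ρ) (hne2 : μ ≠ ρ) :
    ellInf n ρ < ellInf n μ := by
  by_contra! hℓ
  have htop := eq_top_of_ellInf_le (hpres.1 μ hμ) (hpres.1 ρ hρ) hℓ
  have hμρ : μ ≤ ρ := fun i => le_of_tildeOf_le (htop i) (hle.1 i)
  exact hpres.not_Qgen_le K hμ hρ hne2.symm (Qgen_anti K hμρ)

/-- If `μ, ρ ∈ Λ*(I)` are dual generators of a nonzero, proper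
`S_n`-invariant monomial ideal `I` with `μ ≼ ρ` and `μ ≠ ρ`, then `ℓ(μ) > ℓ(ρ)`. -/
theorem statement_6 (K : Type) [Field K] (n : ℕ) (I : Ideal (MvPolynomial (Fin n) K))
    (hmon : IsMonomialIdeal K n I) (hsym : IsSymmetricIdeal K n I)
    (hne : I ≠ ⊥) (hproper : I ≠ ⊤)
    (Λ : Finset (Fin n → ℕ∞)) (hpres : IsDualPresentation K n I Λ)
    (μ ρ : Fin n → ℕ∞) (hμ : μ ∈ Λ) (hρ : ρ ∈ Λ)
    (hle : preceq n μ ρ) (hne2 : μ ≠ ρ) :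
    ellInf n ρ < ellInf n μ :=
  statement_6_general K n I Λ hpres μ ρ hμ hρ hle hne2
end
end
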